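/- arXiv:2109.09142 — 7 statements merged into one kernel-verified Lean document; each statement's English description precedes it below -/
import Mathlib

section
/- Let ε ∈ (0,1), δ ∈ (0,1), Δ > 0, and a > 0 with a² > 2·ln(1.25/δ). Let σ ≥ a·Δ/ε. Then for all y, y' ∈ ℝ with |y − y'| ≤ Δ and every Borel set S ⊆ ℝ, the Gaussian measures satisfy N(y, σ²)(S) ≤ e^ε · N(y', σ²)(S) + δ. -/
/-!
The density ratio of `N(y, σ²)` to `N(y', σ²)` at `x` is `exp L(x)` with privacy loss
`L(x) = (y - y')(2x - y - y') / (2σ²)`. On `{L ≤ ε}` the first measure is at most `e^ε` times the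
second, so it suffices that `N(y, σ²){L > ε} ≤ δ`. Under `N(y, σ²)`, `L` is an affine function of a
standard normal `Z`, and `{L > ε} = {Z > t}` with `t ≥ a - 1/(2a)` by the choice of `σ`.
For `t ≥ 0`, comparing the density with that of `N(t, 1)` on `(t, ∞)` gives
`P(Z > t) ≤ e^{-t²/2} / 2 ≤ δ`. For `t < 0` the condition on `a` forces `a² < 1/2`, hence
`δ > 0.93`, and the crude bound `P(Z > t) ≤ 1/2 + |t| / √(2π)` suffices.
-/

open MeasureTheory ProbabilityTheory Real Set
open scoped NNReal ENNReal

lemma withDensity_le_mul_add_compl {α : Type*} [MeasurableSpace α] (ρ : Measure α) [SFinite ρ]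
    {f g : α → ℝ≥0∞} (hg : Measurable g) {G : Set α} {c : ℝ≥0∞} (hfg : ∀ x ∈ G, f x ≤ c * g x)
    (S : Set α) : ρ.withDensity f S ≤ c * ρ.withDensity g S + ρ.withDensity f Gᶜ := by
  have hgood : ρ.withDensity f (S ∩ G) ≤ c * ρ.withDensity g S :=
    calc ρ.withDensity f (S ∩ G) = ∫⁻ x in S ∩ G, f x ∂ρ := withDensity_apply' f _
      _ ≤ ∫⁻ x in S ∩ G, c * g x ∂ρ := setLIntegral_mono (hg.const_mul c) fun x hx ↦ hfg x hx.2
      _ = c * ∫⁻ x in S ∩ G, g x ∂ρ := lintegral_const_mul c hg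
      _ ≤ c * ρ.withDensity g S := by
        rw [withDensity_apply' g S]
        gcongr
        exact inter_subset_left
  calc ρ.withDensity f S ≤ ρ.withDensity f (S ∩ G) + ρ.withDensity f (S \ G) :=
        measure_le_inter_add_sdiff _ S G
    _ ≤ c * ρ.withDensity g S + ρ.withDensity f Gᶜ :=
        add_le_add hgood (measure_mono (sdiff_subset_compl S G))

lemma sub_one_div_two_mul_le {a ε σ Δ d : ℝ} (ha : 0 < a) (hσ : 0 < σ) (hε : ε ≤ 1)
    (haΔ : a * Δ ≤ σ * ε) (hd : d ≠ 0) (hdΔ : |d| ≤ Δ) :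
    a - 1 / (2 * a) ≤ (σ ^ 2 * ε - d ^ 2 / 2) / (|d| * σ) := by
  have hd_pos : 0 < |d| := abs_pos.2 hd
  have had : a * |d| ≤ σ * ε := (mul_le_mul_of_nonneg_left hdΔ ha.le).trans haΔ
  have h₁ : a ≤ σ * ε / |d| := by rw [le_div_iff₀ hd_pos]; exact had
  have h₂ : |d| / (2 * σ) ≤ 1 / (2 * a) := by
    rw [div_le_div_iff₀ (by positivity) (by positivity)]
    nlinarith
  calc a - 1 / (2 * a) ≤ σ * ε / |d| - |d| / (2 * σ) := by linarith
    _ = (σ ^ 2 * ε - d ^ 2 / 2) / (|d| * σ) := by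
      rw [← sq_abs d]
      field_simp

lemma exp_neg_sq_div_two_le_of_lt_mul_exp {a δ : ℝ} (ha : 0 < a)
    (hδ : 1.25 < δ * rexp (a ^ 2 / 2)) :
    rexp (-(a - 1 / (2 * a)) ^ 2 / 2) / 2 ≤ δ := by
  have ht_sq : (a - 1 / (2 * a)) ^ 2 = a ^ 2 - 1 + (1 / (2 * a)) ^ 2 := by
    field_simp
    ring
  have hexp_half : rexp (1 / 2) < 2 := by
    have := exp_bound_div_one_sub_of_interval' (x := 1 / 2) (by norm_num) (by norm_num)
    norm_num at this ⊢
    exact this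
  have hprod : rexp (-(a - 1 / (2 * a)) ^ 2 / 2) * rexp (a ^ 2 / 2) ≤ rexp (1 / 2) := by
    rw [← exp_add, exp_le_exp]
    nlinarith [sq_nonneg (1 / (2 * a))]
  nlinarith [exp_pos (a ^ 2 / 2), exp_pos (-(a - 1 / (2 * a)) ^ 2 / 2)]

lemma inv_two_sub_div_sqrt_le_of_lt_mul_exp {a δ : ℝ} (ha : 0 < a) (hδ1 : δ < 1)
    (hδ : 1.25 < δ * rexp (a ^ 2 / 2)) (ht : a - 1 / (2 * a) < 0) :
    2⁻¹ - (a - 1 / (2 * a)) / √(2 * π) ≤ δ := by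
  have ha_sq_lt : 2 * a ^ 2 < 1 := by
    have : a < 1 / (2 * a) := by linarith
    rw [lt_div_iff₀ (by positivity)] at this
    nlinarith
  have hδ_big : 0.9375 < δ := by
    have : rexp (a ^ 2 / 2) < 1 / (1 - 1 / 4) :=
      (exp_bound_div_one_sub_of_interval' (by positivity) (by linarith)).trans_le
        (one_div_le_one_div_of_le (by norm_num) (by linarith))
    nlinarith [exp_pos (a ^ 2 / 2)]
  have ha_sq_big : 0.4 < a ^ 2 := by
    by_contra! h
    have : rexp (a ^ 2 / 2) < 1 / (1 - 0.2) := (exp_le_exp.2 (by linarith)).trans_lt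
      (exp_bound_div_one_sub_of_interval' (x := 0.2) (by norm_num) (by norm_num))
    nlinarith [exp_pos (a ^ 2 / 2)]
  have hneg_t : 1 / (2 * a) - a ≤ 1 / 6 := by
    rw [sub_le_iff_le_add, div_le_iff₀ (by positivity)]
    nlinarith
  have hsqrt : 1 ≤ √(2 * π) := one_le_sqrt.2 (by linarith [pi_gt_three])
  have : (1 / (2 * a) - a) / √(2 * π) ≤ 1 / (2 * a) - a := div_le_self (by linarith) hsqrt
  rw [← neg_sub, neg_div] at this
  linarith

namespace ProbabilityTheory

lemma gaussianPDFReal_eq_exp_mul (μ μ' : ℝ) (v : ℝ≥0) (x : ℝ) :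
    gaussianPDFReal μ v x =
      rexp (((x - μ') ^ 2 - (x - μ) ^ 2) / (2 * v)) * gaussianPDFReal μ' v x := by
  simp only [gaussianPDFReal]
  rw [mul_left_comm, ← Real.exp_add]
  ring_nf

lemma gaussianPDF_le_exp_mul {μ μ' ε x : ℝ} {v : ℝ≥0}
    (h : ((x - μ') ^ 2 - (x - μ) ^ 2) / (2 * v) ≤ ε) :
    gaussianPDF μ v x ≤ ENNReal.ofReal (rexp ε) * gaussianPDF μ' v x := by
  rw [gaussianPDF, gaussianPDF, ← ENNReal.ofReal_mul (exp_nonneg ε),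
    gaussianPDFReal_eq_exp_mul μ μ']
  gcongr
  exact gaussianPDFReal_nonneg _ _ _

lemma gaussianPDFReal_le (μ : ℝ) (v : ℝ≥0) (x : ℝ) : gaussianPDFReal μ v x ≤ (√(2 * π * v))⁻¹ := by
  rw [gaussianPDFReal]
  refine mul_le_of_le_one_right (by positivity) (exp_le_one_iff.mpr ?_)
  exact div_nonpos_of_nonpos_of_nonneg (by nlinarith [sq_nonneg (x - μ)]) (by positivity)

lemma gaussianReal_Ioi_self (μ : ℝ) {v : ℝ≥0} (hv : v ≠ 0) : gaussianReal μ v (Ioi μ) = 2⁻¹ := by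
  have := nullSingletonClass_gaussianReal (μ := μ) hv
  have hreflect : (gaussianReal μ v).map (2 * μ - ·) = gaussianReal μ v := by
    rw [gaussianReal_map_const_sub]
    ring_nf
  have hsymm : gaussianReal μ v (Iic μ) = gaussianReal μ v (Ioi μ) := by
    calc gaussianReal μ v (Iic μ) = gaussianReal μ v (Iio μ) := (measure_congr Iio_ae_eq_Iic).symm
      _ = (gaussianReal μ v).map (2 * μ - ·) (Ioi μ) := by
        rw [Measure.map_apply (by fun_prop) measurableSet_Ioi]
        congr 1
        ext x
        simp only [mem_Iio, mem_preimage, mem_Ioi]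
        constructor <;> intro <;> linarith
      _ = gaussianReal μ v (Ioi μ) := by rw [hreflect]
  have htotal := measure_add_measure_compl (μ := gaussianReal μ v) (measurableSet_Ioi (a := μ))
  rw [compl_Ioi, hsymm, measure_univ, ← mul_two] at htotal
  exact ENNReal.eq_inv_of_mul_eq_one_left htotal

lemma gaussianReal_Ioc_le (μ : ℝ) {v : ℝ≥0} (hv : v ≠ 0) (a b : ℝ) :
    gaussianReal μ v (Ioc a b) ≤ ENNReal.ofReal ((b - a) / √(2 * π * v)) := by
  rw [gaussianReal_apply μ hv, div_eq_mul_inv, ENNReal.ofReal_mul' (by positivity), ← volume_Ioc,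
    mul_comm, ← setLIntegral_const]
  exact setLIntegral_mono measurable_const fun x _ ↦
    ENNReal.ofReal_le_ofReal (gaussianPDFReal_le μ v x)

lemma gaussianReal_Ioi_le_exp {t : ℝ} (ht : 0 ≤ t) :
    gaussianReal 0 1 (Ioi t) ≤ ENNReal.ofReal (rexp (-t ^ 2 / 2) / 2) := by
  have hdensity : ∀ x ∈ Ioi t,
      gaussianPDF 0 1 x ≤ ENNReal.ofReal (rexp (-t ^ 2 / 2)) * gaussianPDF t 1 x := by
    intro x hx
    apply gaussianPDF_le_exp_mul
    push_cast
    nlinarith [mul_le_mul_of_nonneg_left (le_of_lt hx) ht]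
  rw [gaussianReal_apply 0 one_ne_zero]
  calc ∫⁻ x in Ioi t, gaussianPDF 0 1 x
      ≤ ∫⁻ x in Ioi t, ENNReal.ofReal (rexp (-t ^ 2 / 2)) * gaussianPDF t 1 x :=
        setLIntegral_mono (by fun_prop) hdensity
    _ = ENNReal.ofReal (rexp (-t ^ 2 / 2)) * gaussianReal t 1 (Ioi t) := by
        rw [lintegral_const_mul _ (measurable_gaussianPDF t 1), gaussianReal_apply t one_ne_zero]
    _ = ENNReal.ofReal (rexp (-t ^ 2 / 2) / 2) := by
        rw [gaussianReal_Ioi_self t one_ne_zero, ENNReal.ofReal_div_of_pos two_pos,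
          ENNReal.ofReal_ofNat, ENNReal.div_eq_inv_mul, mul_comm]

lemma gaussianReal_Ioi_le_of_nonpos {t : ℝ} (ht : t ≤ 0) :
    gaussianReal 0 1 (Ioi t) ≤ ENNReal.ofReal (2⁻¹ - t / √(2 * π)) := by
  calc gaussianReal 0 1 (Ioi t) = gaussianReal 0 1 (Ioc t 0 ∪ Ioi 0) := by
        rw [Ioc_union_Ioi_eq_Ioi ht]
    _ ≤ gaussianReal 0 1 (Ioc t 0) + gaussianReal 0 1 (Ioi 0) := measure_union_le _ _
    _ ≤ ENNReal.ofReal ((0 - t) / √(2 * π * (1 : ℝ≥0))) + ENNReal.ofReal 2⁻¹ := by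
        gcongr
        · exact gaussianReal_Ioc_le 0 one_ne_zero t 0
        · rw [gaussianReal_Ioi_self 0 one_ne_zero, ENNReal.ofReal_inv_of_pos two_pos,
            ENNReal.ofReal_ofNat]
    _ = ENNReal.ofReal (2⁻¹ - t / √(2 * π)) := by
        rw [← ENNReal.ofReal_add (div_nonneg (by linarith) (sqrt_nonneg _)) (by norm_num)]
        push_cast
        ring_nf

lemma gaussianReal_Ioi_eq_Ioi_div_sqrt {v : ℝ≥0} (hv : v ≠ 0) (s : ℝ) :
    gaussianReal 0 v (Ioi s) = gaussianReal 0 1 (Ioi (s / √v)) := by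
  have hscale : gaussianReal 0 v = (gaussianReal 0 1).map (√v * ·) := by
    rw [gaussianReal_map_const_mul, mul_zero]
    congr
    ext
    simp
  have hsqrt : 0 < √(v : ℝ) := sqrt_pos.2 (by positivity)
  rw [hscale, Measure.map_apply (by fun_prop) measurableSet_Ioi]
  congr 1
  ext z
  simp [div_lt_iff₀ hsqrt, mul_comm]

lemma gaussianReal_setOf_lt_mul_sub (μ : ℝ) {v : ℝ≥0} (hv : v ≠ 0) {d : ℝ} (hd : d ≠ 0) (s : ℝ) :
    gaussianReal μ v {x | s < d * (x - μ)} = gaussianReal 0 1 (Ioi (s / (|d| * √v))) := by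
  have hcomp : (fun x ↦ d * (x - μ)) = (d * ·) ∘ (· - μ) := rfl
  rw [show {x | s < d * (x - μ)} = (fun x ↦ d * (x - μ)) ⁻¹' Ioi s from rfl,
    ← Measure.map_apply (by fun_prop) measurableSet_Ioi, hcomp,
    ← Measure.map_map (by fun_prop) (by fun_prop), gaussianReal_map_sub_const,
    gaussianReal_map_const_mul, sub_self, mul_zero, gaussianReal_Ioi_eq_Ioi_div_sqrt]
  · simp [sqrt_mul (sq_nonneg d), sqrt_sq_eq_abs]
  · exact mul_ne_zero (by simpa [← NNReal.coe_ne_zero] using hd) hv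

lemma gaussianReal_Ioi_sub_one_div_le {a δ : ℝ} (ha : 0 < a) (hδ0 : 0 < δ) (hδ1 : δ < 1)
    (ha2 : 2 * log (1.25 / δ) < a ^ 2) :
    gaussianReal 0 1 (Ioi (a - 1 / (2 * a))) ≤ ENNReal.ofReal δ := by
  have hδexp : 1.25 < δ * rexp (a ^ 2 / 2) := by
    rw [← div_lt_iff₀' hδ0, ← log_lt_iff_lt_exp (by positivity)]
    linarith
  rcases le_or_gt 0 (a - 1 / (2 * a)) with ht | ht
  · exact (gaussianReal_Ioi_le_exp ht).trans
      (ENNReal.ofReal_le_ofReal (exp_neg_sq_div_two_le_of_lt_mul_exp ha hδexp))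
  · exact (gaussianReal_Ioi_le_of_nonpos ht.le).trans
      (ENNReal.ofReal_le_ofReal (inv_two_sub_div_sqrt_le_of_lt_mul_exp ha hδ1 hδexp ht))

end ProbabilityTheory

/-- **Gaussian mechanism (one-dimensional).** For `ε ∈ (0,1)`, `δ ∈ (0,1)`, sensitivity `Δ > 0`
and `a > 0` with `a² > 2 ln(1.25/δ)`, if `σ ≥ aΔ/ε` then for any two adjacent outputs
`y, y'` (i.e. `|y - y'| ≤ Δ`) and any Borel set `S`,
`N(y, σ²)(S) ≤ e^ε · N(y', σ²)(S) + δ`. -/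
theorem gaussian_mechanism_dp (ε δ Δ a σ : ℝ)
    (hε : ε ∈ Set.Ioo (0 : ℝ) 1) (hδ : δ ∈ Set.Ioo (0 : ℝ) 1)
    (hΔ : 0 < Δ) (ha : 0 < a)
    (ha2 : 2 * Real.log (1.25 / δ) < a ^ 2)
    (hσ : a * Δ / ε ≤ σ) :
    ∀ y y' : ℝ, |y - y'| ≤ Δ → ∀ S : Set ℝ, MeasurableSet S →
      gaussianReal y (Real.toNNReal (σ ^ 2)) S ≤
        ENNReal.ofReal (Real.exp ε) * gaussianReal y' (Real.toNNReal (σ ^ 2)) S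
          + ENNReal.ofReal δ := by
  obtain ⟨hε0, hε1⟩ := hε
  obtain ⟨hδ0, hδ1⟩ := hδ
  intro y y' hyy' S _
  have hσ0 : 0 < σ := (by positivity : 0 < a * Δ / ε).trans_le hσ
  have haΔ : a * Δ ≤ σ * ε := (div_le_iff₀ hε0).1 hσ
  set v := (σ ^ 2).toNNReal
  have hv : v ≠ 0 := by simpa [v] using hσ0.ne'
  have hvσ : (v : ℝ) = σ ^ 2 := coe_toNNReal _ (sq_nonneg σ)
  set d := y - y'
  -- the event where the privacy loss `log (p_y x / p_y' x)` exceeds `ε`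
  set B := {x | σ ^ 2 * ε - d ^ 2 / 2 < d * (x - y)}
  have hloss : ∀ x ∈ Bᶜ, gaussianPDF y v x ≤ ENNReal.ofReal (rexp ε) * gaussianPDF y' v x := by
    intro x hx
    apply gaussianPDF_le_exp_mul
    simp only [B, mem_compl_iff, mem_ofPred_eq, not_lt] at hx
    rw [hvσ, div_le_iff₀ (by positivity)]
    nlinarith
  have hB : gaussianReal y v B ≤ ENNReal.ofReal δ := by
    rcases eq_or_ne d 0 with hd | hd
    · have : B = ∅ := by
        ext x
        simp only [B, hd, mem_ofPred_eq, mem_empty_iff_false, iff_false, not_lt]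
        nlinarith [mul_pos (pow_pos hσ0 2) hε0]
      simp [this]
    · rw [gaussianReal_setOf_lt_mul_sub y hv hd, hvσ, sqrt_sq hσ0.le]
      exact (measure_mono (Ioi_subset_Ioi (sub_one_div_two_mul_le ha hσ0 hε1.le haΔ hd hyy'))).trans
        (gaussianReal_Ioi_sub_one_div_le ha hδ0 hδ1 ha2)
  calc gaussianReal y v S ≤ ENNReal.ofReal (rexp ε) * gaussianReal y' v S + gaussianReal y v B := by
        simpa only [gaussianReal_of_var_ne_zero _ hv, compl_compl] using
          withDensity_le_mul_add_compl volume (measurable_gaussianPDF y' v) hloss S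
    _ ≤ ENNReal.ofReal (rexp ε) * gaussianReal y' v S + ENNReal.ofReal δ := by gcongr
end

section
/- Fix N ≥ 2, a worker index i, positive reals γ, g_max, channel gains |h_1|,…,|h_N| > 0, powers P_1,…,P_N > 0, power fractions β_1,…,β_N ≥ 0, noise parameters σ > 0, σ_m ≥ 0, and δ ∈ (0,1). Let Δ = 2γ·g_max·√(min_j |h_j|²P_j), let σ_s² = Σ_{k≠i} |h_k|²β_k P_k σ² + σ_m², and let ε_i = (Δ/σ_s)·√(2·ln(1.25/δ)). If 0 < ε_i < 1, then for all y, y' ∈ ℝ with |y − y'| ≤ Δ and every Borel set S ⊆ ℝ, N(y, σ_s²)(S) ≤ e^{ε_i} · N(y', σ_s²)(S) + δ. In other words, the aggregated signal received by worker i, perturbed by the workers' Gaussian noise and the channel noise, is (ε_i, δ)-differentially private with ε_i = (2γ g_max √(min_j |h_j|²P_j) / √(Σ_{k≠i}|h_k|²β_k P_k σ² + σ_m²))·√(2 ln(1.25/δ)). -/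
/-!
The received signal is the Gaussian mechanism applied to a query of sensitivity `Δ`, so the
claim is the classical `(ε, δ)`-privacy of the Gaussian mechanism. Off the privacy-loss set
`B = {x | (x - y')² - (x - y)² > 2 σ_s² ε}` the density of `N(y, σ_s²)` is at most `e^ε` times
that of `N(y', σ_s²)`. Under `N(y, σ_s²)` the privacy loss `(x - y')² - (x - y)²` is again
Gaussian, `N(d², 4 d² σ_s²)` with `d = y - y'`, so `N(y, σ_s²)(B)` is at most the standard
normal tail `P(Z > c - ε / (2c))`, where `c = √(2 ln (1.25 / δ))`. If `u = c - ε / (2c) ≥ 0`,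
then `P(Z > u) ≤ e^{-u²/2} / 2 ≤ δ` because `e^{1/2} ≤ 2.5`; otherwise `ε < 1` forces
`δ > 15/16`, while `P(Z > u) ≤ 1/2 + |u| ≤ 3/4`.
-/

open MeasureTheory Real
open scoped NNReal ENNReal

namespace ProbabilityTheory

lemma gaussianPDF_le_ofReal_exp_mul {μ μ' a x : ℝ} {v : ℝ≥0}
    (h : (x - μ') ^ 2 - (x - μ) ^ 2 ≤ 2 * v * a) :
    gaussianPDF μ v x ≤ ENNReal.ofReal (exp a) * gaussianPDF μ' v x := by
  rcases eq_or_ne v 0 with rfl | hv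
  · simp
  have hv' : (0 : ℝ) < v := by positivity
  rw [gaussianPDF, gaussianPDF, ← ENNReal.ofReal_mul (exp_nonneg a)]
  refine ENNReal.ofReal_le_ofReal ?_
  rw [gaussianPDFReal, gaussianPDFReal, mul_left_comm, ← exp_add]
  gcongr
  rw [add_div' _ _ _ (by positivity), div_le_div_iff_of_pos_right (by positivity)]
  linarith

lemma gaussianReal_le_ofReal_exp_mul {μ μ' a : ℝ} {v : ℝ≥0} (hv : v ≠ 0) {s : Set ℝ}
    (h : ∀ x ∈ s, (x - μ') ^ 2 - (x - μ) ^ 2 ≤ 2 * v * a) :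
    gaussianReal μ v s ≤ ENNReal.ofReal (exp a) * gaussianReal μ' v s := by
  rw [gaussianReal_apply _ hv, gaussianReal_apply _ hv,
    ← lintegral_const_mul _ (measurable_gaussianPDF _ _)]
  exact setLIntegral_mono ((measurable_gaussianPDF _ _).const_mul _)
    fun x hx => gaussianPDF_le_ofReal_exp_mul (h x hx)

lemma gaussianReal_Ioi_self_le_half (μ : ℝ) (v : ℝ≥0) :
    gaussianReal μ v (Set.Ioi μ) ≤ 2⁻¹ := by
  have hreflect : (gaussianReal μ v).map (2 * μ - ·) = gaussianReal μ v := by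
    rw [gaussianReal_map_const_sub]; ring_nf
  have hsymm : gaussianReal μ v (Set.Ioi μ) = gaussianReal μ v (Set.Iio μ) := by
    conv_lhs => rw [← hreflect]
    rw [Measure.map_apply (by fun_prop) measurableSet_Ioi]
    congr 1
    ext x
    simp only [Set.mem_preimage, Set.mem_Ioi, Set.mem_Iio]
    constructor <;> intro <;> linarith
  rw [ENNReal.le_inv_iff_mul_le, mul_two]
  nth_rewrite 2 [hsymm]
  rw [← measure_union Set.Ioi_disjoint_Iio_same measurableSet_Iio]
  exact prob_le_one

lemma gaussianReal_Ioi_le_exp_s2 {v : ℝ≥0} (hv : v ≠ 0) {r : ℝ} (hr : 0 ≤ r) :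
    gaussianReal 0 v (Set.Ioi r) ≤ ENNReal.ofReal (exp (-r ^ 2 / (2 * v))) * 2⁻¹ := by
  have hv' : (0 : ℝ) < v := by positivity
  refine (gaussianReal_le_ofReal_exp_mul (μ' := r) hv fun x hx => ?_).trans
    (by gcongr; exact gaussianReal_Ioi_self_le_half r v)
  rw [mul_div_cancel₀ _ (by positivity)]
  nlinarith [mul_nonneg hr (sub_nonneg.2 (le_of_lt (Set.mem_Ioi.1 hx)))]

lemma gaussianReal_Ioi_neg_le {v : ℝ≥0} (hv : v ≠ 0) {r : ℝ} (hr : 0 ≤ r) :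
    gaussianReal 0 v (Set.Ioi (-r)) ≤ ENNReal.ofReal (r * (√(2 * π * v))⁻¹) + 2⁻¹ := by
  rw [← Set.Ioc_union_Ioi_eq_Ioi (neg_nonpos.2 hr)]
  refine (measure_union_le _ _).trans (add_le_add ?_ (gaussianReal_Ioi_self_le_half 0 v))
  have hpdf : ∀ x, gaussianPDF 0 v x ≤ ENNReal.ofReal (√(2 * π * v))⁻¹ := fun x =>
    ENNReal.ofReal_le_ofReal <| by
      rw [gaussianPDFReal]
      exact mul_le_of_le_one_right (by positivity) (exp_le_one_iff.2
        (div_nonpos_of_nonpos_of_nonneg (neg_nonpos.2 (sq_nonneg _)) (by positivity)))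
  calc gaussianReal 0 v (Set.Ioc (-r) 0)
      ≤ ∫⁻ _ in Set.Ioc (-r) 0, ENNReal.ofReal (√(2 * π * v))⁻¹ := by
        rw [gaussianReal_apply _ hv]; exact setLIntegral_mono measurable_const fun x _ => hpdf x
    _ = ENNReal.ofReal (r * (√(2 * π * v))⁻¹) := by
        rw [setLIntegral_const, Real.volume_Ioc, ← ENNReal.ofReal_mul (by positivity)]
        ring_nf

lemma gaussianReal_Ioi_le_gaussianReal_zero_one {m r u : ℝ} {w : ℝ≥0} (h : m + √w * u ≤ r) :
    gaussianReal m w (Set.Ioi r) ≤ gaussianReal 0 1 (Set.Ioi u) := by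
  have hstd : (gaussianReal 0 1).map (fun z => m + √w * z) = gaussianReal m w := by
    rw [show (fun z => m + √w * z) = (m + ·) ∘ (√w * ·) from rfl,
      ← Measure.map_map (by fun_prop) (by fun_prop), gaussianReal_map_const_mul,
      gaussianReal_map_const_add]
    congr 1
    · ring
    · ext; simp
  rw [← hstd, Measure.map_apply (by fun_prop) measurableSet_Ioi]
  refine measure_mono fun z hz => ?_
  simp only [Set.mem_preimage, Set.mem_Ioi] at hz ⊢
  nlinarith [sqrt_nonneg (w : ℝ)]

lemma gaussianReal_map_sq_sub_sub_sq (y y' : ℝ) (v : ℝ≥0) :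
    (gaussianReal y v).map (fun x => (x - y') ^ 2 - (x - y) ^ 2) =
      gaussianReal ((y - y') ^ 2) (((2 * (y - y')) ^ 2).toNNReal * v) := by
  set d := y - y'
  have haffine : (fun x => (x - y') ^ 2 - (x - y) ^ 2) = (d ^ 2 + ·) ∘ (2 * d * ·) ∘ (· - y) := by
    ext x; simp only [d, Function.comp_apply]; ring
  rw [haffine, ← Measure.map_map (by fun_prop) (by fun_prop),
    ← Measure.map_map (by fun_prop) (by fun_prop), gaussianReal_map_sub_const,
    gaussianReal_map_const_mul, gaussianReal_map_const_add]
  congr 1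
  · ring
  · ext; simp [sq_nonneg]

noncomputable def gaussianMechanismScale (δ : ℝ) : ℝ := √(2 * log (1.25 / δ))

lemma sq_gaussianMechanismScale {δ : ℝ} (hδ : 0 < δ) (hδ1 : δ ≤ 1.25) :
    gaussianMechanismScale δ ^ 2 = 2 * log (1.25 / δ) :=
  sq_sqrt (mul_nonneg zero_le_two (log_nonneg (by rw [le_div_iff₀ hδ]; linarith)))

lemma three_fifths_le_gaussianMechanismScale {δ : ℝ} (hδ : 0 < δ) (hδ1 : δ < 1) :
    3 / 5 ≤ gaussianMechanismScale δ := by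
  have hlog : 1 / 5 ≤ log (1.25 / δ) := by
    have h125 := one_sub_inv_le_log_of_pos (by norm_num : (0 : ℝ) < 1.25)
    have hmono : log 1.25 ≤ log (1.25 / δ) :=
      log_le_log (by norm_num) (by rw [le_div_iff₀ hδ]; linarith)
    norm_num at h125 ⊢
    linarith
  have hc0 : 0 ≤ gaussianMechanismScale δ := sqrt_nonneg _
  nlinarith [sq_gaussianMechanismScale hδ (by linarith)]

lemma gaussianReal_Ioi_gaussianMechanismScale_le {ε δ : ℝ} (hε : 0 < ε) (hε1 : ε < 1)
    (hδ : 0 < δ) (hδ1 : δ < 1) :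
    gaussianReal 0 1 (Set.Ioi (gaussianMechanismScale δ - ε / (2 * gaussianMechanismScale δ)))
      ≤ ENNReal.ofReal δ := by
  have hc2 := sq_gaussianMechanismScale hδ (by linarith)
  have hc := three_fifths_le_gaussianMechanismScale hδ hδ1
  set c := gaussianMechanismScale δ
  have hεc : ε / (2 * c) * (2 * c) = ε := div_mul_cancel₀ _ (by positivity)
  have hδexp : exp (-log (1.25 / δ)) = 4 / 5 * δ := by
    rw [exp_neg, exp_log (by positivity), inv_div]; ring
  have hhalf : (2⁻¹ : ℝ≥0∞) = ENNReal.ofReal 2⁻¹ := by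
    rw [ENNReal.ofReal_inv_of_pos two_pos, ENNReal.ofReal_ofNat]
  rcases le_or_gt 0 (c - ε / (2 * c)) with hu | hu
  · refine (gaussianReal_Ioi_le_exp_s2 one_ne_zero hu).trans ?_
    rw [hhalf, ← ENNReal.ofReal_mul (exp_nonneg _)]
    refine ENNReal.ofReal_le_ofReal ?_
    have hexp : exp (1 / 2) ≤ 2.5 := by
      have h2 : exp (1 / 2) ^ 2 = exp 1 := by rw [← exp_nat_mul]; norm_num
      nlinarith [exp_one_lt_d9, exp_pos (1 / 2)]
    have hu2 : c ^ 2 - 1 ≤ (c - ε / (2 * c)) ^ 2 := by nlinarith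
    calc exp (-(c - ε / (2 * c)) ^ 2 / (2 * ((1 : ℝ≥0) : ℝ))) * 2⁻¹
        ≤ exp (1 / 2 + -log (1.25 / δ)) * 2⁻¹ := by
          gcongr; push_cast; linarith
      _ ≤ δ := by
          rw [exp_add, hδexp]
          nlinarith [mul_le_mul_of_nonneg_right hexp (by positivity : (0 : ℝ) ≤ 4 / 5 * δ)]
  · refine (le_of_eq_of_le (by rw [neg_sub]) (gaussianReal_Ioi_neg_le one_ne_zero
      (r := ε / (2 * c) - c) (by linarith))).trans ?_
    rw [hhalf, ← ENNReal.ofReal_add (mul_nonneg (by linarith) (by positivity)) (by positivity)]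
    refine ENNReal.ofReal_le_ofReal ?_
    have hsmall : c ^ 2 < 1 / 2 := by nlinarith
    have hδ' : 15 / 16 ≤ δ := by
      have := add_one_le_exp (-log (1.25 / δ))
      rw [hδexp] at this
      linarith
    have hpi : (√(2 * π * ((1 : ℝ≥0) : ℝ)))⁻¹ ≤ 1 :=
      inv_le_one_of_one_le₀ (one_le_sqrt.2 (by push_cast; nlinarith [pi_gt_three]))
    have hr : ε / (2 * c) - c ≤ 1 / 4 := by
      rw [sub_le_iff_le_add, div_le_iff₀ (by positivity)]; nlinarith
    nlinarith

theorem gaussianReal_le_exp_mul_add_of_abs_sub_mul_le {v : ℝ≥0} (hv : v ≠ 0) {ε δ y y' : ℝ}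
    (hε : 0 < ε) (hε1 : ε < 1) (hδ : 0 < δ) (hδ1 : δ < 1)
    (hyy' : |y - y'| * gaussianMechanismScale δ ≤ √v * ε) (S : Set ℝ) :
    gaussianReal y v S ≤ ENNReal.ofReal (exp ε) * gaussianReal y' v S + ENNReal.ofReal δ := by
  set B := (fun x => (x - y') ^ 2 - (x - y) ^ 2) ⁻¹' Set.Ioi (2 * v * ε)
  have hgood : gaussianReal y v (S \ B) ≤ ENNReal.ofReal (exp ε) * gaussianReal y' v S :=
    (gaussianReal_le_ofReal_exp_mul hv fun x hx => not_lt.1 hx.2).trans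
      (by gcongr; exact Set.sdiff_subset)
  have hbad : gaussianReal y v B ≤ ENNReal.ofReal δ := by
    rw [← Measure.map_apply (by fun_prop) measurableSet_Ioi, gaussianReal_map_sq_sub_sub_sq]
    refine (gaussianReal_Ioi_le_gaussianReal_zero_one ?_).trans
      (gaussianReal_Ioi_gaussianMechanismScale_le hε hε1 hδ hδ1)
    have hc : 0 < gaussianMechanismScale δ :=
      lt_of_lt_of_le (by norm_num) (three_fifths_le_gaussianMechanismScale hδ hδ1)
    set c := gaussianMechanismScale δ
    rw [NNReal.coe_mul, Real.coe_toNNReal _ (sq_nonneg _), sqrt_mul (sq_nonneg _),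
      sqrt_sq_eq_abs, abs_mul, abs_two, ← sq_abs (y - y')]
    set a := |y - y'|
    set s := √(v : ℝ)
    have hq : a ≤ s * ε / c := (le_div_iff₀ hc).2 hyy'
    have hsplit :
        a ^ 2 + 2 * a * s * (c - ε / (2 * c)) = a * (a - s * ε / c) + 2 * s * (a * c) := by
      field_simp; ring
    have hs2 : s ^ 2 = v := sq_sqrt (NNReal.coe_nonneg v)
    rw [hsplit]
    nlinarith [mul_nonpos_of_nonneg_of_nonpos (abs_nonneg (y - y')) (sub_nonpos.2 hq),
      mul_le_mul_of_nonneg_left hyy' (by positivity : (0 : ℝ) ≤ 2 * s)]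
  calc gaussianReal y v S ≤ gaussianReal y v (S \ B ∪ B) :=
        measure_mono (Set.subset_sdiff_union S B)
    _ ≤ gaussianReal y v (S \ B) + gaussianReal y v B := measure_union_le _ _
    _ ≤ _ := add_le_add hgood hbad

end ProbabilityTheory

open ProbabilityTheory

theorem dwfl_privacy_general (N : ℕ) (i : Fin N)
    (γ gmax : ℝ)
    (habs P β : Fin N → ℝ)
    (σ σm δ : ℝ) (hδ : δ ∈ Set.Ioo (0 : ℝ) 1) :
    let Δ : ℝ := 2 * γ * gmax *
      Real.sqrt (Finset.univ.inf' ⟨i, Finset.mem_univ i⟩ fun j => (habs j) ^ 2 * P j)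
    let σs2 : ℝ := (∑ k ∈ Finset.univ.erase i, (habs k) ^ 2 * β k * P k * σ ^ 2) + σm ^ 2
    let εi : ℝ := (Δ / Real.sqrt σs2) * Real.sqrt (2 * Real.log (1.25 / δ))
    0 < εi → εi < 1 →
      ∀ y y' : ℝ, |y - y'| ≤ Δ → ∀ S : Set ℝ, MeasurableSet S →
        gaussianReal y (Real.toNNReal σs2) S ≤
          ENNReal.ofReal (Real.exp εi) * gaussianReal y' (Real.toNNReal σs2) S
            + ENNReal.ofReal δ := by
  intro Δ σs2 εi hε hε1 y y' hyy' S _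
  -- `εi > 0` rules out `√σs2 = 0`, where the division defining `εi` returns `0`.
  have hσs2 : 0 < σs2 := sqrt_ne_zero'.1 fun h => by simp [εi, h] at hε
  refine gaussianReal_le_exp_mul_add_of_abs_sub_mul_le (Real.toNNReal_pos.2 hσs2).ne' hε hε1
    hδ.1 hδ.2 ?_ S
  rw [Real.coe_toNNReal _ hσs2.le]
  calc |y - y'| * gaussianMechanismScale δ ≤ Δ * gaussianMechanismScale δ := by
        gcongr; exact sqrt_nonneg _
    _ = √σs2 * εi := by
        simp only [εi, gaussianMechanismScale]
        field_simp [(sqrt_pos.2 hσs2).ne']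

/-- **(ε_i, δ)-differential privacy of the aggregated signal in DWFL (Theorem 1).**
With sensitivity `Δ = 2γ g_max √(min_j |h_j|² P_j)` and total Gaussian noise variance
`σ_s² = Σ_{k≠i} |h_k|² β_k P_k σ² + σ_m²`, if the resulting
`ε_i = (Δ/σ_s)·√(2 ln(1.25/δ))` lies in `(0,1)`, then the Gaussian-perturbed aggregate
received by worker `i` is `(ε_i, δ)`-differentially private. -/
theorem dwfl_privacy (N : ℕ) (hN : 2 ≤ N) (i : Fin N)
    (γ gmax : ℝ) (hγ : 0 < γ) (hgmax : 0 < gmax)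
    (habs P β : Fin N → ℝ)
    (hh : ∀ k, 0 < habs k) (hP : ∀ k, 0 < P k) (hβ : ∀ k, 0 ≤ β k)
    (σ σm δ : ℝ) (hσ : 0 < σ) (hσm : 0 ≤ σm) (hδ : δ ∈ Set.Ioo (0 : ℝ) 1) :
    let Δ : ℝ := 2 * γ * gmax *
      Real.sqrt (Finset.univ.inf' ⟨i, Finset.mem_univ i⟩ fun j => (habs j) ^ 2 * P j)
    let σs2 : ℝ := (∑ k ∈ Finset.univ.erase i, (habs k) ^ 2 * β k * P k * σ ^ 2) + σm ^ 2
    let εi : ℝ := (Δ / Real.sqrt σs2) * Real.sqrt (2 * Real.log (1.25 / δ))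
    0 < εi → εi < 1 →
      ∀ y y' : ℝ, |y - y'| ≤ Δ → ∀ S : Set ℝ, MeasurableSet S →
        gaussianReal y (Real.toNNReal σs2) S ≤
          ENNReal.ofReal (Real.exp εi) * gaussianReal y' (Real.toNNReal σs2) S
            + ENNReal.ofReal δ :=
  dwfl_privacy_general N i γ gmax habs P β σ σm δ hδ
end

section
/- Fix N ≥ 2, a worker index i and a worker index j ≠ i, γ > 0, g_max ≥ 0, channel gains |h_1|,…,|h_N| > 0 and powers P_1,…,P_N > 0, and set c = √(min_j |h_j|²P_j). Let u_1,…,u_N ∈ ℝ^d and let g_j, g_j' ∈ ℝ^d satisfy ‖g_j‖ ≤ g_max and ‖g_j'‖ ≤ g_max. Define x_k = u_k − γ g_k for all k (with arbitrary fixed g_k of norm at most g_max for k ≠ j), and define x_k' identically except that worker j uses g_j' in place of g_j. Then ‖c·Σ_{k≠i} x_k − c·Σ_{k≠i} x_k'‖ ≤ 2γ·g_max·√(min_j |h_j|²P_j). -/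
open Finset

/-! Only worker `j`'s term of the sum changes, and it changes by `γ • (g' - g j)`, a vector of norm
at most `γ · 2 g_max`; scaling by `c ≥ 0` multiplies this bound by `c`. -/

theorem Finset.sum_sub_smul_sub_sum_sub_smul_update {ι R M : Type*} [DecidableEq ι] [Ring R]
    [AddCommGroup M] [Module R M] {s : Finset ι} {j : ι} (hj : j ∈ s) (γ : R) (u g : ι → M)
    (a : M) :
    ∑ k ∈ s, (u k - γ • g k) - ∑ k ∈ s, (u k - γ • Function.update g j a k) = γ • (a - g j) := by
  rw [← sum_sub_distrib, sum_eq_single_of_mem j hj]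
  · rw [Function.update_self, smul_sub]
    abel
  · intro k _ hkj
    rw [Function.update_of_ne hkj, sub_self]

theorem norm_smul_smul_sub_le {E : Type*} [SeminormedAddCommGroup E] [NormedSpace ℝ E]
    {c γ r : ℝ} (hc : 0 ≤ c) (hγ : 0 ≤ γ) {a b : E} (ha : ‖a‖ ≤ r) (hb : ‖b‖ ≤ r) :
    ‖c • γ • (a - b)‖ ≤ 2 * γ * r * c := by
  calc ‖c • γ • (a - b)‖ = c * (γ * ‖a - b‖) := by
        rw [norm_smul, norm_smul, Real.norm_of_nonneg hc, Real.norm_of_nonneg hγ]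
    _ ≤ c * (γ * (r + r)) := by gcongr; exact norm_sub_le_of_le ha hb
    _ = 2 * γ * r * c := by ring

theorem dwfl_sensitivity_general {d : ℕ} (N : ℕ) (i j : Fin N) (hij : j ≠ i)
    (γ gmax : ℝ) (hγ : 0 < γ)
    (habs P : Fin N → ℝ)
    (u : Fin N → EuclideanSpace ℝ (Fin d))
    (g : Fin N → EuclideanSpace ℝ (Fin d)) (gj' : EuclideanSpace ℝ (Fin d))
    (hg : ∀ k, ‖g k‖ ≤ gmax) (hgj' : ‖gj'‖ ≤ gmax)
    (x x' : Fin N → EuclideanSpace ℝ (Fin d))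
    (hx : ∀ k, x k = u k - γ • g k)
    (hx' : ∀ k, x' k = u k - γ • (Function.update g j gj') k) :
    let c : ℝ := Real.sqrt (Finset.univ.inf' ⟨i, Finset.mem_univ i⟩ fun k => (habs k) ^ 2 * P k)
    ‖(c • ∑ k ∈ Finset.univ.erase i, x k) - (c • ∑ k ∈ Finset.univ.erase i, x' k)‖ ≤
      2 * γ * gmax *
        Real.sqrt (Finset.univ.inf' ⟨i, Finset.mem_univ i⟩ fun k => (habs k) ^ 2 * P k) := by
  intro c
  have hj : j ∈ univ.erase i := mem_erase.2 ⟨hij, mem_univ j⟩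
  simp only [hx, hx']
  rw [← smul_sub, sum_sub_smul_sub_sum_sub_smul_update hj]
  exact norm_smul_smul_sub_le (Real.sqrt_nonneg _) hγ.le hgj' (hg j)

/-- **L2-sensitivity of the aggregated query in DWFL.** If worker `j ≠ i` changes its local
dataset (hence its clipped stochastic gradient `g j` changes to `gj'`, both of norm at most
`g_max`), the aggregate `c·Σ_{k≠i} x_k` with `c = √(min_j |h_j|² P_j)` changes by at most
`2γ·g_max·√(min_j |h_j|² P_j)`. -/
theorem dwfl_sensitivity {d : ℕ} (N : ℕ) (hN : 2 ≤ N) (i j : Fin N) (hij : j ≠ i)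
    (γ gmax : ℝ) (hγ : 0 < γ) (hgmax : 0 ≤ gmax)
    (habs P : Fin N → ℝ) (hh : ∀ k, 0 < habs k) (hP : ∀ k, 0 < P k)
    (u : Fin N → EuclideanSpace ℝ (Fin d))
    (g : Fin N → EuclideanSpace ℝ (Fin d)) (gj' : EuclideanSpace ℝ (Fin d))
    (hg : ∀ k, ‖g k‖ ≤ gmax) (hgj' : ‖gj'‖ ≤ gmax)
    (x x' : Fin N → EuclideanSpace ℝ (Fin d))
    (hx : ∀ k, x k = u k - γ • g k)
    (hx' : ∀ k, x' k = u k - γ • (Function.update g j gj') k) :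
    let c : ℝ := Real.sqrt (Finset.univ.inf' ⟨i, Finset.mem_univ i⟩ fun k => (habs k) ^ 2 * P k)
    ‖(c • ∑ k ∈ Finset.univ.erase i, x k) - (c • ∑ k ∈ Finset.univ.erase i, x' k)‖ ≤
      2 * γ * gmax *
        Real.sqrt (Finset.univ.inf' ⟨i, Finset.mem_univ i⟩ fun k => (habs k) ^ 2 * P k) :=
  dwfl_sensitivity_general N i j hij γ gmax hγ habs P u g gj' hg hgj' x x' hx hx'
end

section
/- Let N ≥ 2, d ≥ 1, γ, η ∈ ℝ, and let X, G, Φ ∈ ℝ^{d×N}. Let J ∈ ℝ^{N×N} be the all-ones matrix, W = (J − I)/(N−1), Ψ = (1−η)I + ηW, and let A = (1/N, …, 1/N)ᵀ ∈ ℝ^N. Then ((X − γG)Ψ + Φ(Ψ − I))·A = (X − γG)·A. In particular, if x̄ denotes the average of the columns of X and Ḡ the average of the columns of G, the average of the columns of the updated matrix X⁺ = (X − γG)Ψ + Φ(Ψ − I) equals x̄ − γḠ; i.e., from a global view the DWFL update is exactly a gradient-descent step on the column average, unaffected by the perturbation Φ. -/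
/-!
The all-ones matrix `J` sends a constant vector `c` to `N c`, so `W = (J - I)/(N - 1)` fixes
every constant vector, and hence so does every mixing matrix `Ψ = (1 - η) I + η W`. Since
`A` is constant, `(Y Ψ + Φ (Ψ - I)) A = Y (Ψ A) + Φ (Ψ A - A) = Y A`.
-/

open Finset Matrix

namespace Matrix

variable {m n R : Type*} [Fintype n]

theorem mulVec_const [NonUnitalNonAssocSemiring R] (M : Matrix m n R) (c : R) :
    M *ᵥ (fun _ => c) = fun r => (∑ j, M r j) * c := by
  funext r
  simp [mulVec, dotProduct, Finset.sum_mul]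

theorem of_one_mulVec_const [NonAssocSemiring R] (c : R) :
    (of fun _ _ => (1 : R) : Matrix n n R) *ᵥ (fun _ => c) = fun _ => (Fintype.card n : R) * c := by
  simp [mulVec_const]

variable [DecidableEq n]

theorem uniformAveraging_mulVec_const [Field R] (hn : (Fintype.card n : R) - 1 ≠ 0) (c : R) :
    (((Fintype.card n : R) - 1)⁻¹ • (of (fun _ _ => (1 : R)) - 1) : Matrix n n R) *ᵥ
      (fun _ => c) = fun _ => c := by
  rw [smul_mulVec, sub_mulVec, of_one_mulVec_const, one_mulVec]
  funext i
  simp only [Pi.smul_apply, Pi.sub_apply, smul_eq_mul]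
  field_simp

theorem mixing_mulVec_of_mulVec_eq [CommRing R] {W : Matrix n n R} {v : n → R}
    (hW : W *ᵥ v = v) (η : R) : ((1 - η) • (1 : Matrix n n R) + η • W) *ᵥ v = v := by
  rw [add_mulVec, smul_mulVec, smul_mulVec, one_mulVec, hW, ← add_smul, sub_add_cancel,
    one_smul]

theorem add_mul_sub_one_mulVec_of_mulVec_eq [CommRing R] (Y Φ : Matrix m n R)
    {Ψ : Matrix n n R} {v : n → R} (hΨ : Ψ *ᵥ v = v) :
    (Y * Ψ + Φ * (Ψ - 1)) *ᵥ v = Y *ᵥ v := by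
  rw [add_mulVec, ← mulVec_mulVec, ← mulVec_mulVec, hΨ, sub_mulVec, hΨ, one_mulVec, sub_self,
    mulVec_zero, add_zero]

end Matrix

theorem dwfl_average_update_general (N d : ℕ) (hN : 2 ≤ N) (γ η : ℝ)
    (X G Φ : Matrix (Fin d) (Fin N) ℝ)
    (J W Ψ : Matrix (Fin N) (Fin N) ℝ)
    (hJ : J = Matrix.of fun _ _ => (1 : ℝ))
    (hW : W = ((N : ℝ) - 1)⁻¹ • (J - 1))
    (hΨ : Ψ = (1 - η) • (1 : Matrix (Fin N) (Fin N) ℝ) + η • W)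
    (A : Fin N → ℝ) (hA : A = fun _ => 1 / (N : ℝ)) :
    ((X - γ • G) * Ψ + Φ * (Ψ - 1)) *ᵥ A = (X - γ • G) *ᵥ A ∧
    ((X - γ • G) * Ψ + Φ * (Ψ - 1)) *ᵥ A =
      fun r => (1 / (N : ℝ)) * (∑ i, X r i) - γ * ((1 / (N : ℝ)) * ∑ i, G r i) := by
  have hN1 : (N : ℝ) - 1 ≠ 0 := by
    have : (2 : ℝ) ≤ N := by exact_mod_cast hN
    linarith
  have hWA : W *ᵥ A = A := by
    have := uniformAveraging_mulVec_const (n := Fin N) (by rwa [Fintype.card_fin]) (1 / (N : ℝ))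
    rwa [Fintype.card_fin, ← hJ, ← hW, ← hA] at this
  have hAvg := add_mul_sub_one_mulVec_of_mulVec_eq (X - γ • G) Φ
    (hΨ ▸ mixing_mulVec_of_mulVec_eq hWA η)
  refine ⟨hAvg, hAvg.trans ?_⟩
  funext r
  simp only [hA, mulVec_const, Matrix.sub_apply, Matrix.smul_apply, smul_eq_mul, sum_sub_distrib,
    ← mul_sum]
  ring

/-- **The DWFL update is exact gradient descent on the column average.** Multiplying the
global update `X⁺ = (X − γG)Ψ + Φ(Ψ − I)` by the averaging vector `A = (1/N,…,1/N)ᵀ`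
gives `(X − γG)·A`; in particular the average of the updated columns is `x̄ − γḠ`,
unaffected by the perturbation `Φ`. -/
theorem dwfl_average_update (N d : ℕ) (hN : 2 ≤ N) (hd : 1 ≤ d) (γ η : ℝ)
    (X G Φ : Matrix (Fin d) (Fin N) ℝ)
    (J W Ψ : Matrix (Fin N) (Fin N) ℝ)
    (hJ : J = Matrix.of fun _ _ => (1 : ℝ))
    (hW : W = ((N : ℝ) - 1)⁻¹ • (J - 1))
    (hΨ : Ψ = (1 - η) • (1 : Matrix (Fin N) (Fin N) ℝ) + η • W)
    (A : Fin N → ℝ) (hA : A = fun _ => 1 / (N : ℝ)) :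
    ((X - γ • G) * Ψ + Φ * (Ψ - 1)) *ᵥ A = (X - γ • G) *ᵥ A ∧
    ((X - γ • G) * Ψ + Φ * (Ψ - 1)) *ᵥ A =
      fun r => (1 / (N : ℝ)) * (∑ i, X r i) - γ * ((1 / (N : ℝ)) * ∑ i, G r i) :=
  dwfl_average_update_general N d hN γ η X G Φ J W Ψ hJ hW hΨ A hA
end

section
/- Let N, d, T ≥ 1 and m ≥ 1 be integers. Let Ψ ∈ ℝ^{N×N} be a symmetric doubly stochastic matrix all of whose eigenvalues lie in [0,1], and let λ_N denote its smallest eigenvalue. Then for any matrices M_0, …, M_{T−1} ∈ ℝ^{d×N}: Σ_{t=0}^{T−1} ‖ Σ_{s=0}^{t} M_s (Ψ − I)^m Ψ^{t−s} ‖_F² ≤ (1 − λ_N)^{2m−2} · Σ_{t=0}^{T−1} ‖M_t‖_F². -/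
/-!
Diagonalise `Ψ = U D Uᵀ` with `U` orthogonal. Right multiplication by `U` preserves the Frobenius
norm and turns each summand `M_s (Ψ - I)^m Ψ^(t-s)` into `(M_s U) diag((λ_i - 1)^m λ_i^(t-s))`, so
the inequality splits into one scalar inequality per entry. Each of these is a discrete Young
inequality `‖y * a‖₂ ≤ ‖a‖₁ ‖y‖₂` for the causal kernel `a_k = (λ - 1)^m λ^k`, whose `ℓ¹`-norm is
`(1 - λ)^m Σ_k λ^k ≤ (1 - λ)^(m-1)` for `λ ∈ [0, 1]`.
-/

open Finset Matrix

/-- Squared Frobenius norm of a real matrix. -/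
def frobSq {d N : ℕ} (M : Matrix (Fin d) (Fin N) ℝ) : ℝ :=
  ∑ r, ∑ c, (M r c) ^ 2

theorem sum_range_sq_convolution_le {y a : ℕ → ℝ} {A : ℝ}
    (hA : ∀ n, ∑ k ∈ range n, |a k| ≤ A) (T : ℕ) :
    ∑ t ∈ range T, (∑ s ∈ range (t + 1), y s * a (t - s)) ^ 2 ≤
      A ^ 2 * ∑ t ∈ range T, y t ^ 2 := by
  have hA0 : 0 ≤ A := (hA 0).trans' (by simp)
  have cauchy_schwarz (t : ℕ) : (∑ s ∈ range (t + 1), y s * a (t - s)) ^ 2 ≤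
      A * ∑ s ∈ range (t + 1), y s ^ 2 * |a (t - s)| := by
    have hsum : ∑ s ∈ range (t + 1), |a (t - s)| ≤ A := by
      simpa using (sum_range_reflect (fun k => |a k|) (t + 1)).le.trans (hA _)
    calc _ ≤ (∑ s ∈ range (t + 1), |a (t - s)|) * ∑ s ∈ range (t + 1), y s ^ 2 * |a (t - s)| :=
          sum_sq_le_sum_mul_sum_of_sq_le_mul _ (fun _ _ => abs_nonneg _) (fun _ _ => by positivity)
            fun s _ => le_of_eq (by rw [mul_pow, ← sq_abs (a _)]; ring)
      _ ≤ A * ∑ s ∈ range (t + 1), y s ^ 2 * |a (t - s)| := by gcongr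
  have swap : ∑ t ∈ range T, ∑ s ∈ range (t + 1), y s ^ 2 * |a (t - s)| =
      ∑ s ∈ range T, y s ^ 2 * ∑ k ∈ range (T - s), |a k| := by
    rw [sum_comm' (s' := fun s => Ico s T) (t' := range T)
      (fun t s => by simp only [mem_range, mem_Ico]; omega)]
    refine sum_congr rfl fun s _ => ?_
    rw [mul_sum, sum_Ico_eq_sum_range]
    simp only [add_tsub_cancel_left]
  calc ∑ t ∈ range T, (∑ s ∈ range (t + 1), y s * a (t - s)) ^ 2
      ≤ A * ∑ s ∈ range T, y s ^ 2 * ∑ k ∈ range (T - s), |a k| := by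
        rw [← swap, mul_sum]; exact sum_le_sum fun t _ => cauchy_schwarz t
    _ ≤ A * ∑ s ∈ range T, y s ^ 2 * A := by gcongr; exact hA _
    _ = A ^ 2 * ∑ t ∈ range T, y t ^ 2 := by rw [← sum_mul]; ring

theorem sum_range_abs_sub_one_pow_succ_mul_pow_le {μ : ℝ} (h0 : 0 ≤ μ) (h1 : μ ≤ 1) (m n : ℕ) :
    ∑ k ∈ range n, |(μ - 1) ^ (m + 1) * μ ^ k| ≤ (1 - μ) ^ m :=
  calc ∑ k ∈ range n, |(μ - 1) ^ (m + 1) * μ ^ k|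
      = (1 - μ) ^ m * ((1 - μ) * ∑ k ∈ range n, μ ^ k) := by
        rw [mul_sum, mul_sum]
        refine sum_congr rfl fun k _ => ?_
        rw [abs_mul, abs_pow, abs_pow, abs_sub_comm, abs_of_nonneg (sub_nonneg.2 h1),
          abs_of_nonneg h0]
        ring
    _ = (1 - μ) ^ m * (1 - μ ^ n) := by rw [mul_neg_geom_sum]
    _ ≤ (1 - μ) ^ m := by
        have : 0 ≤ 1 - μ := sub_nonneg.2 h1
        nlinarith [pow_nonneg h0 n, pow_nonneg this m]

theorem sum_range_sq_convolution_sub_one_pow_mul_pow_le {μ lam : ℝ} (hlam : lam ≤ μ)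
    (h0 : 0 ≤ μ) (h1 : μ ≤ 1) {m : ℕ} (hm : 1 ≤ m) (y : ℕ → ℝ) (T : ℕ) :
    ∑ t ∈ range T, (∑ s ∈ range (t + 1), y s * ((μ - 1) ^ m * μ ^ (t - s))) ^ 2 ≤
      (1 - lam) ^ (2 * m - 2) * ∑ t ∈ range T, y t ^ 2 := by
  obtain ⟨m, rfl⟩ := Nat.exists_eq_add_of_le' hm
  calc _ ≤ ((1 - μ) ^ m) ^ 2 * ∑ t ∈ range T, y t ^ 2 :=
        sum_range_sq_convolution_le (a := fun k => (μ - 1) ^ (m + 1) * μ ^ k)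
          (sum_range_abs_sub_one_pow_succ_mul_pow_le h0 h1 m) T
    _ ≤ (1 - lam) ^ (2 * (m + 1) - 2) * ∑ t ∈ range T, y t ^ 2 := by
        rw [← pow_mul, show 2 * (m + 1) - 2 = m * 2 by omega]
        gcongr

theorem frobSq_eq_trace_mul_transpose {d N : ℕ} (M : Matrix (Fin d) (Fin N) ℝ) :
    frobSq M = (M * Mᵀ).trace := by
  simp [frobSq, trace, mul_apply, sq]

theorem frobSq_mul_unitary {d N : ℕ} (M : Matrix (Fin d) (Fin N) ℝ)
    {U : Matrix (Fin N) (Fin N) ℝ} (hU : U ∈ unitary (Matrix (Fin N) (Fin N) ℝ)) :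
    frobSq (M * U) = frobSq M := by
  replace hU : U * Uᵀ = 1 := by
    simpa [star_eq_conjTranspose] using Unitary.mul_star_self_of_mem hU
  rw [frobSq_eq_trace_mul_transpose, frobSq_eq_trace_mul_transpose, transpose_mul,
    Matrix.mul_assoc M, ← Matrix.mul_assoc _ _ Mᵀ, hU, Matrix.one_mul]

theorem sum_range_frobSq_convolution_diagonal_le {d N m : ℕ} (hm : 1 ≤ m) {μ : Fin N → ℝ}
    {lam : ℝ} (hμ : ∀ i, μ i ∈ Set.Icc (0 : ℝ) 1) (hlam : ∀ i, lam ≤ μ i)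
    (Y : ℕ → Matrix (Fin d) (Fin N) ℝ) (T : ℕ) :
    ∑ t ∈ range T,
        frobSq (∑ s ∈ range (t + 1), Y s * diagonal fun i => (μ i - 1) ^ m * μ i ^ (t - s)) ≤
      (1 - lam) ^ (2 * m - 2) * ∑ t ∈ range T, frobSq (Y t) := by
  have hrc (r : Fin d) (c : Fin N) := sum_range_sq_convolution_sub_one_pow_mul_pow_le (hlam c)
    (hμ c).1 (hμ c).2 hm (fun s => Y s r c) T
  simp only [frobSq, Matrix.sum_apply, mul_diagonal]
  calc _ = ∑ r, ∑ c, ∑ t ∈ range T,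
          (∑ s ∈ range (t + 1), Y s r c * ((μ c - 1) ^ m * μ c ^ (t - s))) ^ 2 := by
        rw [sum_comm]; exact sum_congr rfl fun r _ => sum_comm
    _ ≤ ∑ r, ∑ c, (1 - lam) ^ (2 * m - 2) * ∑ t ∈ range T, Y t r c ^ 2 := by
        gcongr with r _ c _; exact hrc r c
    _ = _ := by
        simp only [← mul_sum]
        rw [sum_comm (s := range T)]
        exact congrArg _ (sum_congr rfl fun r _ => sum_comm)

theorem Matrix.IsHermitian.sub_one_pow_mul_pow {n : Type*} [Fintype n] [DecidableEq n]
    {A : Matrix n n ℝ} (hA : A.IsHermitian) (m k : ℕ) :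
    (A - 1) ^ m * A ^ k = Unitary.conjStarAlgAut ℝ _ hA.eigenvectorUnitary
      (diagonal fun i => (hA.eigenvalues i - 1) ^ m * hA.eigenvalues i ^ k) := by
  conv_lhs =>
    rw [hA.spectral_theorem, ← map_one (Unitary.conjStarAlgAut ℝ _ hA.eigenvectorUnitary)]
  rw [← map_sub, ← map_pow, ← map_pow, ← map_mul, ← diagonal_one, diagonal_sub, diagonal_pow,
    diagonal_pow, diagonal_mul_diagonal]
  rfl

theorem Matrix.IsHermitian.hasEigenvalue_eigenvalues {n : Type*} [Fintype n] [DecidableEq n]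
    {A : Matrix n n ℝ} (hA : A.IsHermitian) (i : n) :
    Module.End.HasEigenvalue (toLin' A) (hA.eigenvalues i) := by
  rw [Module.End.hasEigenvalue_iff_mem_spectrum, spectrum_toLin',
    hA.spectrum_real_eq_range_eigenvalues]
  exact Set.mem_range_self i

theorem matrix_sequence_bound_one_general (N d T m : ℕ)
    (hm : 1 ≤ m)
    (Ψ : Matrix (Fin N) (Fin N) ℝ) (hsymm : Ψ.IsSymm)
    (heig : ∀ μ : ℝ, Module.End.HasEigenvalue (Matrix.toLin' Ψ) μ → μ ∈ Set.Icc (0 : ℝ) 1)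
    (lamN : ℝ)
    (hlamN_min : ∀ μ : ℝ, Module.End.HasEigenvalue (Matrix.toLin' Ψ) μ → lamN ≤ μ)
    (M : ℕ → Matrix (Fin d) (Fin N) ℝ) :
    ∑ t ∈ Finset.range T,
        frobSq (∑ s ∈ Finset.range (t + 1), M s * (Ψ - 1) ^ m * Ψ ^ (t - s)) ≤
      (1 - lamN) ^ (2 * m - 2) * ∑ t ∈ Finset.range T, frobSq (M t) := by
  have hΨ : Ψ.IsHermitian := isHermitian_iff_isSymm.2 hsymm
  set U : Matrix (Fin N) (Fin N) ℝ := (hΨ.eigenvectorUnitary : Matrix (Fin N) (Fin N) ℝ)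
  have hU : U ∈ unitary (Matrix (Fin N) (Fin N) ℝ) := hΨ.eigenvectorUnitary.2
  have hdiag (t : ℕ) :
      (∑ s ∈ range (t + 1), M s * (Ψ - 1) ^ m * Ψ ^ (t - s)) * U =
        ∑ s ∈ range (t + 1), M s * U *
          diagonal fun i => (hΨ.eigenvalues i - 1) ^ m * hΨ.eigenvalues i ^ (t - s) := by
    simp only [Matrix.sum_mul, Matrix.mul_assoc, hΨ.sub_one_pow_mul_pow,
      Unitary.conjStarAlgAut_apply, U, Unitary.coe_star_mul_self, Matrix.mul_one]
  calc _ = ∑ t ∈ range T, frobSq (∑ s ∈ range (t + 1), M s * U *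
          diagonal fun i => (hΨ.eigenvalues i - 1) ^ m * hΨ.eigenvalues i ^ (t - s)) := by
        simp only [← hdiag, frobSq_mul_unitary _ hU]
    _ ≤ (1 - lamN) ^ (2 * m - 2) * ∑ t ∈ range T, frobSq (M t * U) :=
        sum_range_frobSq_convolution_diagonal_le hm
          (fun i => heig _ (hΨ.hasEigenvalue_eigenvalues i))
          (fun i => hlamN_min _ (hΨ.hasEigenvalue_eigenvalues i)) _ T
    _ = _ := by simp only [frobSq_mul_unitary _ hU]

/-- **Lemma 3 (matrix sequence inequality).** For a symmetric doubly stochastic matrix `Ψ`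
with all eigenvalues in `[0,1]` and smallest eigenvalue `λ_N`, and any matrices
`M_0, …, M_{T−1}`:
`Σ_t ‖Σ_{s≤t} M_s (Ψ−I)^m Ψ^{t−s}‖_F² ≤ (1−λ_N)^{2m−2} Σ_t ‖M_t‖_F²`. -/
theorem matrix_sequence_bound_one (N d T m : ℕ)
    (hN : 1 ≤ N) (hd : 1 ≤ d) (hT : 1 ≤ T) (hm : 1 ≤ m)
    (Ψ : Matrix (Fin N) (Fin N) ℝ) (hsymm : Ψ.IsSymm)
    (hnonneg : ∀ i j, 0 ≤ Ψ i j)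
    (hrow : ∀ i, ∑ j, Ψ i j = 1) (hcol : ∀ j, ∑ i, Ψ i j = 1)
    (heig : ∀ μ : ℝ, Module.End.HasEigenvalue (Matrix.toLin' Ψ) μ → μ ∈ Set.Icc (0 : ℝ) 1)
    (lamN : ℝ) (hlamN : Module.End.HasEigenvalue (Matrix.toLin' Ψ) lamN)
    (hlamN_min : ∀ μ : ℝ, Module.End.HasEigenvalue (Matrix.toLin' Ψ) μ → lamN ≤ μ)
    (M : ℕ → Matrix (Fin d) (Fin N) ℝ) :
    ∑ t ∈ Finset.range T,
        frobSq (∑ s ∈ Finset.range (t + 1), M s * (Ψ - 1) ^ m * Ψ ^ (t - s)) ≤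
      (1 - lamN) ^ (2 * m - 2) * ∑ t ∈ Finset.range T, frobSq (M t) :=
  matrix_sequence_bound_one_general N d T m hm Ψ hsymm heig lamN hlamN_min M
end

section
/- Let N, d, T ≥ 1 be integers. Let Ψ ∈ ℝ^{N×N} be a symmetric doubly stochastic matrix all of whose eigenvalues lie in [0,1], and let λ_2 denote the largest eigenvalue of Ψ restricted to the subspace {v ∈ ℝ^N : Σ_i v_i = 0}; assume λ_2 < 1. Let (1/N)_N ∈ ℝ^{N×N} be the matrix with all entries 1/N. Then for any matrices M_0, …, M_{T−1} ∈ ℝ^{d×N}: Σ_{t=0}^{T−1} ‖ Σ_{s=0}^{t} M_s (I − (1/N)_N) Ψ^{t−s} ‖_F² ≤ (1/(1 − λ_2)²) · Σ_{t=0}^{T−1} ‖M_t‖_F². -/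
open Finset Matrix

/-! The centering matrix `1 - averaging n` (the paper's `I - (1/N)_N`) is the orthogonal projection
onto mean-zero vectors, and a symmetric doubly stochastic `Ψ` commutes with it. Hence the centred
part of an eigenvector of `Ψ` is again an eigenvector for the same eigenvalue, and it is nonzero as
soon as the eigenvector is not orthogonal to a given mean-zero `w`. Expanding `w` in an orthonormal
eigenbasis therefore gives `‖Ψ w‖ ≤ λ₂ ‖w‖`, so, row by row, `‖A (I - (1/N)_N) Ψ^k‖_F ≤ λ₂^k ‖A‖_F`.
By the triangle inequality the claim reduces to the discrete Young inequality
`Σ_t (Σ_{s ≤ t} λ₂^(t-s) a_s)² ≤ (Σ_k λ₂^k)² Σ_t a_t²`, which follows from Cauchy–Schwarz. -/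

open scoped Matrix.Norms.Frobenius

theorem Matrix.IsHermitian.mulVec_dotProduct_self_le {n : Type*} [Fintype n] [DecidableEq n]
    {A : Matrix n n ℝ} (hA : A.IsHermitian) {c : ℝ} {w : n → ℝ}
    (h : ∀ i, w ⬝ᵥ hA.eigenvectorBasis i ≠ 0 → hA.eigenvalues i ^ 2 ≤ c) :
    A *ᵥ w ⬝ᵥ A *ᵥ w ≤ c * (w ⬝ᵥ w) := by
  have parseval (v : n → ℝ) : v ⬝ᵥ v = ∑ i, (v ⬝ᵥ hA.eigenvectorBasis i) ^ 2 := by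
    have h := hA.eigenvectorBasis.sum_sq_inner_right (WithLp.toLp 2 v)
    rw [← real_inner_self_eq_norm_sq, EuclideanSpace.inner_toLp_toLp] at h
    simpa [EuclideanSpace.inner_eq_star_dotProduct] using h.symm
  have hAT : Aᵀ = A := isHermitian_iff_isSymm.mp hA
  have coeff (i : n) : A *ᵥ w ⬝ᵥ hA.eigenvectorBasis i =
      hA.eigenvalues i * (w ⬝ᵥ hA.eigenvectorBasis i) := by
    rw [dotProduct_comm, dotProduct_mulVec, ← mulVec_transpose, hAT,
      hA.mulVec_eigenvectorBasis, smul_dotProduct, dotProduct_comm, smul_eq_mul]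
  rw [parseval, parseval, mul_sum]
  refine sum_le_sum fun i _ => ?_
  rw [coeff, mul_pow]
  by_cases hi : w ⬝ᵥ hA.eigenvectorBasis i = 0
  · simp [hi]
  · exact mul_le_mul_of_nonneg_right (h i hi) (sq_nonneg _)

noncomputable def averaging (n : Type*) [Fintype n] : Matrix n n ℝ :=
  of fun _ _ => (Fintype.card n : ℝ)⁻¹

section averaging

variable {n : Type*} [Fintype n]

lemma averaging_mulVec (v : n → ℝ) :
    averaging n *ᵥ v = fun _ => (∑ i, v i) / Fintype.card n := by
  ext; simp [averaging, mulVec, dotProduct, ← mul_sum, div_eq_inv_mul]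

lemma transpose_averaging : (averaging n)ᵀ = averaging n := rfl

lemma sum_centering_mulVec [DecidableEq n] (v : n → ℝ) :
    ∑ i, ((1 - averaging n) *ᵥ v) i = 0 := by
  rcases isEmpty_or_nonempty n with hn | hn
  · simp
  · simp [sub_mulVec, averaging_mulVec, sum_sub_distrib, mul_div_cancel₀]

lemma averaging_mulVec_dotProduct {u w : n → ℝ} (hw : ∑ i, w i = 0) :
    averaging n *ᵥ u ⬝ᵥ w = 0 := by
  simp [averaging_mulVec, dotProduct, ← mul_sum, hw]

lemma centering_mulVec_dotProduct_self_le [DecidableEq n] (v : n → ℝ) :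
    (1 - averaging n) *ᵥ v ⬝ᵥ (1 - averaging n) *ᵥ v ≤ v ⬝ᵥ v := by
  set p := (1 - averaging n) *ᵥ v
  set q := averaging n *ᵥ v
  have hv : v = p + q := by simp [p, q, sub_mulVec]
  have horth : q ⬝ᵥ p = 0 := averaging_mulVec_dotProduct (sum_centering_mulVec v)
  calc p ⬝ᵥ p ≤ p ⬝ᵥ p + q ⬝ᵥ q :=
        le_add_of_nonneg_right (by simpa using dotProduct_self_star_nonneg q)
    _ = v ⬝ᵥ v := by
      rw [hv, add_dotProduct, dotProduct_add, dotProduct_add, dotProduct_comm p q, horth]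
      ring

lemma mul_averaging {Ψ : Matrix n n ℝ} (hrow : ∀ i, ∑ j, Ψ i j = 1) :
    Ψ * averaging n = averaging n := by
  ext i j; simp [averaging, mul_apply, ← sum_mul, hrow]

end averaging

lemma Matrix.hasEigenvalue_toLin'_of_mulVec_eq_smul {R n : Type*} [CommRing R] [Fintype n]
    [DecidableEq n] {A : Matrix n n R} {μ : R} {v : n → R} (hv : v ≠ 0) (h : A *ᵥ v = μ • v) :
    Module.End.HasEigenvalue (toLin' A) μ :=
  Module.End.hasEigenvalue_of_hasEigenvector
    ⟨Module.End.mem_eigenspace_iff.mpr (by rwa [toLin'_apply]), hv⟩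

section doublyStochastic

variable {n : Type*} [Fintype n] {Ψ : Matrix n n ℝ}

lemma commute_centering [DecidableEq n] (hsymm : Ψ.IsSymm) (hrow : ∀ i, ∑ j, Ψ i j = 1) :
    Commute Ψ (1 - averaging n) := by
  have hΨK : Ψ * averaging n = averaging n := mul_averaging hrow
  have hKΨ : averaging n * Ψ = averaging n := by
    rw [← transpose_averaging, ← hsymm.eq, ← transpose_mul, hΨK, transpose_averaging]
  exact (Commute.one_right Ψ).sub_right (hΨK.trans hKΨ.symm)

lemma sum_mulVec_of_isSymm (hsymm : Ψ.IsSymm) (hrow : ∀ i, ∑ j, Ψ i j = 1) (w : n → ℝ) :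
    ∑ i, (Ψ *ᵥ w) i = ∑ i, w i := by
  have hone : (1 : n → ℝ) ᵥ* Ψ = 1 := by
    rw [← mulVec_transpose, hsymm.eq]
    ext i
    simp [mulVec, dotProduct, hrow]
  rw [← one_dotProduct, dotProduct_mulVec, hone, one_dotProduct]

lemma mulVec_dotProduct_self_le_of_sum_eq_zero [DecidableEq n] (hsymm : Ψ.IsSymm)
    (hrow : ∀ i, ∑ j, Ψ i j = 1) (heig : ∀ μ, Module.End.HasEigenvalue (toLin' Ψ) μ → 0 ≤ μ)
    {lam2 : ℝ}
    (hmax : ∀ (μ : ℝ) (v : n → ℝ), v ≠ 0 → ∑ i, v i = 0 → Ψ *ᵥ v = μ • v → μ ≤ lam2)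
    {w : n → ℝ} (hw : ∑ i, w i = 0) :
    Ψ *ᵥ w ⬝ᵥ Ψ *ᵥ w ≤ lam2 ^ 2 * (w ⬝ᵥ w) := by
  have hΨ : Ψ.IsHermitian := isHermitian_iff_isSymm.mpr hsymm
  refine hΨ.mulVec_dotProduct_self_le fun i hi => ?_
  set u := ⇑(hΨ.eigenvectorBasis i)
  set μ := hΨ.eigenvalues i
  set u₀ := (1 - averaging n) *ᵥ u
  have hu₀ : Ψ *ᵥ u₀ = μ • u₀ := by
    rw [mulVec_mulVec, (commute_centering hsymm hrow).eq, ← mulVec_mulVec,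
      hΨ.mulVec_eigenvectorBasis, mulVec_smul]
  have hwu₀ : w ⬝ᵥ u₀ = w ⬝ᵥ u := by
    rw [show u₀ = u - averaging n *ᵥ u by simp [u₀, sub_mulVec], dotProduct_sub,
      dotProduct_comm w (averaging n *ᵥ u), averaging_mulVec_dotProduct hw, sub_zero]
  have hu₀0 : u₀ ≠ 0 := fun h => hi (by rw [← hwu₀, h, dotProduct_zero])
  exact pow_le_pow_left₀ (heig μ (hasEigenvalue_toLin'_of_mulVec_eq_smul hu₀0 hu₀))
    (hmax μ u₀ hu₀0 (sum_centering_mulVec u) hu₀) 2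

lemma pow_mulVec_dotProduct_self_le_of_sum_eq_zero [DecidableEq n] (hsymm : Ψ.IsSymm)
    (hrow : ∀ i, ∑ j, Ψ i j = 1) (heig : ∀ μ, Module.End.HasEigenvalue (toLin' Ψ) μ → 0 ≤ μ)
    {lam2 : ℝ}
    (hmax : ∀ (μ : ℝ) (v : n → ℝ), v ≠ 0 → ∑ i, v i = 0 → Ψ *ᵥ v = μ • v → μ ≤ lam2)
    (k : ℕ) {w : n → ℝ} (hw : ∑ i, w i = 0) :
    Ψ ^ k *ᵥ w ⬝ᵥ Ψ ^ k *ᵥ w ≤ (lam2 ^ 2) ^ k * (w ⬝ᵥ w) := by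
  induction k generalizing w with
  | zero => simp
  | succ k ih =>
    rw [pow_succ, ← mulVec_mulVec]
    calc Ψ ^ k *ᵥ (Ψ *ᵥ w) ⬝ᵥ Ψ ^ k *ᵥ (Ψ *ᵥ w)
        ≤ (lam2 ^ 2) ^ k * (Ψ *ᵥ w ⬝ᵥ Ψ *ᵥ w) :=
          ih (by rw [sum_mulVec_of_isSymm hsymm hrow, hw])
      _ ≤ (lam2 ^ 2) ^ k * (lam2 ^ 2 * (w ⬝ᵥ w)) := by
        gcongr
        exact mulVec_dotProduct_self_le_of_sum_eq_zero hsymm hrow heig hmax hw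
      _ = (lam2 ^ 2) ^ (k + 1) * (w ⬝ᵥ w) := by ring

lemma vecMul_centering_mul_pow_dotProduct_self_le [DecidableEq n] (hsymm : Ψ.IsSymm)
    (hrow : ∀ i, ∑ j, Ψ i j = 1) (heig : ∀ μ, Module.End.HasEigenvalue (toLin' Ψ) μ → 0 ≤ μ)
    {lam2 : ℝ}
    (hmax : ∀ (μ : ℝ) (v : n → ℝ), v ≠ 0 → ∑ i, v i = 0 → Ψ *ᵥ v = μ • v → μ ≤ lam2)
    (k : ℕ) (x : n → ℝ) :
    x ᵥ* ((1 - averaging n) * Ψ ^ k) ⬝ᵥ x ᵥ* ((1 - averaging n) * Ψ ^ k) ≤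
      (lam2 ^ 2) ^ k * (x ⬝ᵥ x) := by
  have hx : x ᵥ* ((1 - averaging n) * Ψ ^ k) = Ψ ^ k *ᵥ ((1 - averaging n) *ᵥ x) := by
    rw [← mulVec_transpose, transpose_mul, transpose_pow, hsymm.eq, transpose_sub, transpose_one,
      transpose_averaging, mulVec_mulVec]
  rw [hx]
  calc _ ≤ (lam2 ^ 2) ^ k * ((1 - averaging n) *ᵥ x ⬝ᵥ (1 - averaging n) *ᵥ x) :=
        pow_mulVec_dotProduct_self_le_of_sum_eq_zero hsymm hrow heig hmax k
          (sum_centering_mulVec x)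
    _ ≤ (lam2 ^ 2) ^ k * (x ⬝ᵥ x) := by
        gcongr
        exact centering_mulVec_dotProduct_self_le x

end doublyStochastic

lemma frobSq_eq_norm_sq {d N : ℕ} (A : Matrix (Fin d) (Fin N) ℝ) : frobSq A = ‖A‖ ^ 2 := by
  rw [frobenius_norm_def, ← Real.sqrt_eq_rpow, Real.sq_sqrt (by positivity)]
  simp [frobSq]

lemma frobSq_mul_le {d N m : ℕ} (A : Matrix (Fin d) (Fin N) ℝ) (B : Matrix (Fin N) (Fin m) ℝ)
    {c : ℝ} (h : ∀ x, x ᵥ* B ⬝ᵥ x ᵥ* B ≤ c * (x ⬝ᵥ x)) : frobSq (A * B) ≤ c * frobSq A := by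
  have hrows {m' : ℕ} (C : Matrix (Fin d) (Fin m') ℝ) : frobSq C = ∑ r, C r ⬝ᵥ C r := by
    simp [frobSq, dotProduct, sq]
  rw [hrows, hrows, mul_sum]
  exact sum_le_sum fun r _ => h (A r)

theorem sq_sum_conv_le {g : ℕ → ℝ} {G : ℝ} (hg : ∀ k, 0 ≤ g k)
    (hG : ∀ m, ∑ k ∈ range m, g k ≤ G) (a : ℕ → ℝ) (t : ℕ) :
    (∑ s ∈ range (t + 1), g (t - s) * a s) ^ 2 ≤
      G * ∑ s ∈ range (t + 1), g (t - s) * a s ^ 2 := by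
  have hreflect : ∑ s ∈ range (t + 1), g (t - s) = ∑ k ∈ range (t + 1), g k := by
    simpa using sum_range_reflect g (t + 1)
  calc (∑ s ∈ range (t + 1), g (t - s) * a s) ^ 2
      ≤ (∑ s ∈ range (t + 1), g (t - s)) * ∑ s ∈ range (t + 1), g (t - s) * a s ^ 2 :=
        sum_sq_le_sum_mul_sum_of_sq_le_mul _ (fun _ _ => hg _)
          (fun _ _ => mul_nonneg (hg _) (sq_nonneg _)) (fun _ _ => le_of_eq (by ring))
    _ ≤ G * ∑ s ∈ range (t + 1), g (t - s) * a s ^ 2 := by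
        rw [hreflect]
        exact mul_le_mul_of_nonneg_right (hG _)
          (sum_nonneg fun _ _ => mul_nonneg (hg _) (sq_nonneg _))

theorem sum_sq_conv_le {g : ℕ → ℝ} {G : ℝ} (hg : ∀ k, 0 ≤ g k)
    (hG : ∀ m, ∑ k ∈ range m, g k ≤ G) (a : ℕ → ℝ) (T : ℕ) :
    ∑ t ∈ range T, (∑ s ∈ range (t + 1), g (t - s) * a s) ^ 2 ≤
      G ^ 2 * ∑ t ∈ range T, a t ^ 2 := by
  have hG0 : 0 ≤ G := by simpa using hG 0
  have htail (s : ℕ) : ∑ t ∈ Ico s T, g (t - s) ≤ G := by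
    simpa [sum_Ico_eq_sum_range] using hG (T - s)
  calc ∑ t ∈ range T, (∑ s ∈ range (t + 1), g (t - s) * a s) ^ 2
      ≤ ∑ t ∈ range T, G * ∑ s ∈ range (t + 1), g (t - s) * a s ^ 2 :=
        sum_le_sum fun t _ => sq_sum_conv_le hg hG a t
    _ = G * ∑ s ∈ range T, (∑ t ∈ Ico s T, g (t - s)) * a s ^ 2 := by
        simp_rw [← mul_sum, sum_mul, range_eq_Ico, sum_Ico_Ico_comm]
    _ ≤ G * ∑ s ∈ range T, G * a s ^ 2 := by
        gcongr with s
        exact htail s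
    _ = G ^ 2 * ∑ t ∈ range T, a t ^ 2 := by
        rw [← mul_sum, ← mul_assoc, sq]

theorem geom_sum_range_le_of_lt_one {x : ℝ} (hx : 0 ≤ x) (h'x : x < 1) (m : ℕ) :
    ∑ k ∈ range m, x ^ k ≤ 1 / (1 - x) := by
  have h := geom_sum_Ico_le_of_lt_one (m := 0) (n := m) hx h'x
  rwa [pow_zero, ← range_eq_Ico] at h

theorem matrix_sequence_bound_two_general (N d T : ℕ)
    (Ψ : Matrix (Fin N) (Fin N) ℝ) (hsymm : Ψ.IsSymm)
    (hrow : ∀ i, ∑ j, Ψ i j = 1)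
    (heig : ∀ μ : ℝ, Module.End.HasEigenvalue (Matrix.toLin' Ψ) μ → μ ∈ Set.Icc (0 : ℝ) 1)
    (lam2 : ℝ) (hlam2_lt : lam2 < 1)
    (hlam2_eig : ∃ v : Fin N → ℝ, v ≠ 0 ∧ (∑ i, v i) = 0 ∧ Ψ *ᵥ v = lam2 • v)
    (hlam2_max : ∀ (μ : ℝ) (v : Fin N → ℝ),
      v ≠ 0 → (∑ i, v i) = 0 → Ψ *ᵥ v = μ • v → μ ≤ lam2)
    (K : Matrix (Fin N) (Fin N) ℝ) (hK : K = Matrix.of fun _ _ => (N : ℝ)⁻¹)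
    (M : ℕ → Matrix (Fin d) (Fin N) ℝ) :
    ∑ t ∈ Finset.range T,
        frobSq (∑ s ∈ Finset.range (t + 1), M s * (1 - K) * Ψ ^ (t - s)) ≤
      (1 / (1 - lam2) ^ 2) * ∑ t ∈ Finset.range T, frobSq (M t) := by
  have hK_eq : K = averaging (Fin N) := by simp [hK, averaging]
  have heig_nonneg (μ : ℝ) (hμ : Module.End.HasEigenvalue (toLin' Ψ) μ) : 0 ≤ μ := (heig μ hμ).1
  have hlam2 : 0 ≤ lam2 := by
    obtain ⟨v, hv, -, hΨv⟩ := hlam2_eig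
    exact heig_nonneg lam2 (hasEigenvalue_toLin'_of_mulVec_eq_smul hv hΨv)
  have hterm (k : ℕ) (A : Matrix (Fin d) (Fin N) ℝ) :
      ‖A * (1 - K) * Ψ ^ k‖ ≤ lam2 ^ k * ‖A‖ := by
    rw [← pow_le_pow_iff_left₀ (norm_nonneg _) (by positivity) two_ne_zero, mul_pow,
      ← frobSq_eq_norm_sq, ← frobSq_eq_norm_sq, pow_right_comm, hK_eq, Matrix.mul_assoc]
    exact frobSq_mul_le _ _
      (vecMul_centering_mul_pow_dotProduct_self_le hsymm hrow heig_nonneg hlam2_max k)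
  calc ∑ t ∈ range T, frobSq (∑ s ∈ range (t + 1), M s * (1 - K) * Ψ ^ (t - s))
      ≤ ∑ t ∈ range T, (∑ s ∈ range (t + 1), lam2 ^ (t - s) * ‖M s‖) ^ 2 := by
        simp_rw [frobSq_eq_norm_sq]
        gcongr with t
        exact (norm_sum_le _ _).trans (sum_le_sum fun s _ => hterm (t - s) (M s))
    _ ≤ (1 / (1 - lam2)) ^ 2 * ∑ t ∈ range T, ‖M t‖ ^ 2 :=
        sum_sq_conv_le (pow_nonneg hlam2) (geom_sum_range_le_of_lt_one hlam2 hlam2_lt) _ T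
    _ = 1 / (1 - lam2) ^ 2 * ∑ t ∈ range T, frobSq (M t) := by
        simp_rw [frobSq_eq_norm_sq, div_pow, one_pow]

/-- **Lemma 4 (matrix sequence inequality).** For a symmetric doubly stochastic matrix `Ψ`
with all eigenvalues in `[0,1]`, whose largest eigenvalue `λ₂` on the mean-zero subspace
satisfies `λ₂ < 1`, and any matrices `M_0, …, M_{T−1}`:
`Σ_t ‖Σ_{s≤t} M_s (I − (1/N)_N) Ψ^{t−s}‖_F² ≤ (1/(1−λ₂)²) Σ_t ‖M_t‖_F²`. -/
theorem matrix_sequence_bound_two (N d T : ℕ)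
    (hN : 1 ≤ N) (hd : 1 ≤ d) (hT : 1 ≤ T)
    (Ψ : Matrix (Fin N) (Fin N) ℝ) (hsymm : Ψ.IsSymm)
    (hnonneg : ∀ i j, 0 ≤ Ψ i j)
    (hrow : ∀ i, ∑ j, Ψ i j = 1) (hcol : ∀ j, ∑ i, Ψ i j = 1)
    (heig : ∀ μ : ℝ, Module.End.HasEigenvalue (Matrix.toLin' Ψ) μ → μ ∈ Set.Icc (0 : ℝ) 1)
    (lam2 : ℝ) (hlam2_lt : lam2 < 1)
    (hlam2_eig : ∃ v : Fin N → ℝ, v ≠ 0 ∧ (∑ i, v i) = 0 ∧ Ψ *ᵥ v = lam2 • v)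
    (hlam2_max : ∀ (μ : ℝ) (v : Fin N → ℝ),
      v ≠ 0 → (∑ i, v i) = 0 → Ψ *ᵥ v = μ • v → μ ≤ lam2)
    (K : Matrix (Fin N) (Fin N) ℝ) (hK : K = Matrix.of fun _ _ => (N : ℝ)⁻¹)
    (M : ℕ → Matrix (Fin d) (Fin N) ℝ) :
    ∑ t ∈ Finset.range T,
        frobSq (∑ s ∈ Finset.range (t + 1), M s * (1 - K) * Ψ ^ (t - s)) ≤
      (1 / (1 - lam2) ^ 2) * ∑ t ∈ Finset.range T, frobSq (M t) :=
  matrix_sequence_bound_two_general N d T Ψ hsymm hrow heig lam2 hlam2_lt hlam2_eig hlam2_max K hK M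
end

section
/- Let N ≥ 4, d ≥ 1, T ≥ 1, γ > 0, σ_z ≥ 0. Let J ∈ ℝ^{N×N} be the all-ones matrix and W = (J − I)/(N−1). On a probability space, for t = 0, …, T−1 let G_t, Φ_t ∈ ℝ^{d×N} be square-integrable random matrices with E‖Φ_t‖_F² ≤ σ_z²·d·N, and define X_{−1/2} = 0 and X_{t+1/2} = (X_{t−1/2} − γ G_t)·W + Φ_t·(W − I). Then Σ_{t=0}^{T−1} E‖X_{t−1/2}(I − (1/N)_N)‖_F² ≤ (2γ²(N−1)²/N²)·Σ_{t=0}^{T−1} E‖G_t‖_F² + 8·σ_z²·d·N·T. -/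
/-!
Right multiplication by `P = I - (1/N)_N` subtracts the row means, and `J P = 0` gives
`W P = -c P` with `c = 1/(N-1) ≤ 1/3`. Hence `Y t = X t P` satisfies
`Y (t+1) = -c Y t + (c γ G t - (c+1) Φ t) P`, and as `P` does not increase the Frobenius norm,
`‖Y (t+1)‖² ≤ ‖Y t‖²/3 + 3c²γ²‖G t‖² + 3(c+1)²‖Φ t‖²`. Summing this contracting recursion from
`Y 0 = 0` bounds `(2/3) Σ E‖Y t‖²` by the summed forcing terms, and for `N ≥ 4` the resulting
constants satisfy `9c²/2 ≤ 2(N-1)²/N²` and `9(c+1)²/2 ≤ 8`.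
-/

open MeasureTheory Matrix Finset

section FrobSq

variable {d N : ℕ}

lemma frobSq_nonneg (M : Matrix (Fin d) (Fin N) ℝ) : 0 ≤ frobSq M := by
  unfold frobSq; positivity

lemma frobSq_smul (a : ℝ) (M : Matrix (Fin d) (Fin N) ℝ) :
    frobSq (a • M) = a ^ 2 * frobSq M := by
  simp only [frobSq, Matrix.smul_apply, smul_eq_mul, mul_pow, mul_sum]

lemma frobSq_add_add_le (A B C : Matrix (Fin d) (Fin N) ℝ) :
    frobSq (A + B + C) ≤ 3 * (frobSq A + frobSq B + frobSq C) := by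
  simp only [frobSq, Matrix.add_apply, ← sum_add_distrib, mul_sum]
  gcongr with r _ c _
  nlinarith [sq_nonneg (A r c - B r c), sq_nonneg (B r c - C r c), sq_nonneg (A r c - C r c)]

lemma sum_sub_mean_sq_le {ι : Type*} [Fintype ι] (x : ι → ℝ) :
    ∑ i, (x i - (∑ j, x j) / Fintype.card ι) ^ 2 ≤ ∑ i, x i ^ 2 := by
  rcases isEmpty_or_nonempty ι with hι | hι
  · simp
  set n : ℝ := (Fintype.card ι : ℝ)
  have hn : n ≠ 0 := by positivity
  have hexpand : ∑ i, (x i - (∑ j, x j) / n) ^ 2 = ∑ i, x i ^ 2 - (∑ j, x j) ^ 2 / n := by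
    simp only [sub_sq, sum_add_distrib, sum_sub_distrib, ← sum_mul, ← mul_sum, sum_const,
      card_univ, nsmul_eq_mul]
    field_simp
    ring
  rw [hexpand]
  have : 0 ≤ (∑ j, x j) ^ 2 / n := by positivity
  linarith

lemma mul_one_sub_avg_apply (M : Matrix (Fin d) (Fin N) ℝ) (r : Fin d) (c : Fin N) :
    (M * (1 - of fun _ _ => (N : ℝ)⁻¹ : Matrix (Fin N) (Fin N) ℝ)) r c
      = M r c - (∑ j, M r j) / N := by
  rw [Matrix.mul_sub, Matrix.mul_one, Matrix.sub_apply, mul_apply]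
  simp [← sum_mul, div_eq_mul_inv]

lemma frobSq_mul_one_sub_avg_le (M : Matrix (Fin d) (Fin N) ℝ) :
    frobSq (M * (1 - of fun _ _ => (N : ℝ)⁻¹ : Matrix (Fin N) (Fin N) ℝ)) ≤ frobSq M := by
  refine sum_le_sum fun r _ => ?_
  simpa only [mul_one_sub_avg_apply, Fintype.card_fin] using sum_sub_mean_sq_le (M r)

end FrobSq

lemma allOnes_mul_one_sub_avg {N : ℕ} (hN : N ≠ 0) :
    (of fun _ _ => (1 : ℝ) : Matrix (Fin N) (Fin N) ℝ) *
      (1 - of fun _ _ => (N : ℝ)⁻¹ : Matrix (Fin N) (Fin N) ℝ) = 0 := by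
  rw [Matrix.mul_sub, Matrix.mul_one, sub_eq_zero]
  ext i j
  simp [mul_apply, hN]

lemma smul_allOnes_sub_one_mul_one_sub_avg {N : ℕ} (hN : N ≠ 0) (c : ℝ) :
    c • ((of fun _ _ => (1 : ℝ) : Matrix (Fin N) (Fin N) ℝ) - 1) *
      (1 - of fun _ _ => (N : ℝ)⁻¹ : Matrix (Fin N) (Fin N) ℝ)
      = -c • (1 - of fun _ _ => (N : ℝ)⁻¹ : Matrix (Fin N) (Fin N) ℝ) := by
  rw [Matrix.smul_mul, Matrix.sub_mul, allOnes_mul_one_sub_avg hN, Matrix.one_mul, zero_sub,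
    smul_neg, neg_smul]

lemma consensus_step_eq {m n : Type*} [Fintype n] [DecidableEq n] {W P : Matrix n n ℝ} {c : ℝ}
    (hWP : W * P = -c • P) (γ : ℝ) (X G Φ : Matrix m n ℝ) :
    ((X - γ • G) * W + Φ * (W - 1)) * P
      = -c • (X * P) + (c * γ) • (G * P) + (-(c + 1)) • (Φ * P) := by
  simp only [Matrix.add_mul, Matrix.sub_mul, Matrix.mul_sub, Matrix.mul_assoc, hWP,
    Matrix.one_mul, Matrix.mul_smul, Matrix.smul_mul]
  module

lemma frobSq_consensus_step_le {d N : ℕ} {W P : Matrix (Fin N) (Fin N) ℝ} {c : ℝ}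
    (hc₀ : 0 ≤ c) (hc₃ : c ≤ 1 / 3) (hWP : W * P = -c • P)
    (hP : ∀ M : Matrix (Fin d) (Fin N) ℝ, frobSq (M * P) ≤ frobSq M)
    (γ : ℝ) (X G Φ : Matrix (Fin d) (Fin N) ℝ) :
    frobSq (((X - γ • G) * W + Φ * (W - 1)) * P) ≤
      1 / 3 * frobSq (X * P) + (3 * (c * γ) ^ 2 * frobSq G + 3 * (c + 1) ^ 2 * frobSq Φ) := by
  rw [consensus_step_eq hWP]
  refine (frobSq_add_add_le _ _ _).trans ?_
  simp only [frobSq_smul, neg_sq]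
  have hc : 3 * c ^ 2 ≤ 1 / 3 := by nlinarith
  linarith [mul_le_mul_of_nonneg_right hc (frobSq_nonneg (X * P)),
    mul_le_mul_of_nonneg_left (hP G) (sq_nonneg (c * γ)),
    mul_le_mul_of_nonneg_left (hP Φ) (sq_nonneg (c + 1))]

section AffineRecursion

variable {Ω : Type*}

def affineRec (ρ : ℝ) (b : ℕ → Ω → ℝ) : ℕ → Ω → ℝ
  | 0 => 0
  | t + 1 => fun ω => ρ * affineRec ρ b t ω + b t ω

lemma le_affineRec {ρ : ℝ} (hρ : 0 ≤ ρ) {y b : ℕ → Ω → ℝ} (hy₀ : ∀ ω, y 0 ω ≤ 0)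
    (hy : ∀ t ω, y (t + 1) ω ≤ ρ * y t ω + b t ω) : ∀ t ω, y t ω ≤ affineRec ρ b t ω
  | 0, ω => hy₀ ω
  | t + 1, ω => (hy t ω).trans <| by
      have := le_affineRec hρ hy₀ hy t ω
      simp only [affineRec]
      gcongr

variable [MeasurableSpace Ω] {μ : Measure Ω}

lemma integrable_affineRec (ρ : ℝ) {b : ℕ → Ω → ℝ} (hb : ∀ t, Integrable (b t) μ) :
    ∀ t, Integrable (affineRec ρ b t) μ
  | 0 => integrable_zero _ _ _
  | t + 1 => ((integrable_affineRec ρ hb t).const_mul ρ).add (hb t)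

lemma integral_affineRec_succ (ρ : ℝ) {b : ℕ → Ω → ℝ} (hb : ∀ t, Integrable (b t) μ) (t : ℕ) :
    ∫ ω, affineRec ρ b (t + 1) ω ∂μ = ρ * ∫ ω, affineRec ρ b t ω ∂μ + ∫ ω, b t ω ∂μ := by
  simp only [affineRec]
  rw [integral_add ((integrable_affineRec ρ hb t).const_mul ρ) (hb t), integral_const_mul]

end AffineRecursion

lemma one_sub_mul_sum_range_add_le {y b : ℕ → ℝ} {ρ : ℝ} (hy₀ : y 0 ≤ 0)
    (hy : ∀ t, y (t + 1) ≤ ρ * y t + b t) (T : ℕ) :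
    (1 - ρ) * ∑ t ∈ range T, y t + y T ≤ ∑ t ∈ range T, b t := by
  induction T with
  | zero => simpa using hy₀
  | succ T ih =>
    rw [sum_range_succ, sum_range_succ]
    linarith [hy T]

/-- No measurability of `y t` is assumed, so its expectation is controlled through the integrable
majorant `affineRec ρ b t`. -/
lemma one_sub_mul_sum_integral_le {Ω : Type*} [MeasurableSpace Ω] {μ : Measure Ω} {ρ : ℝ}
    (hρ₀ : 0 ≤ ρ) (hρ₁ : ρ ≤ 1) {y b : ℕ → Ω → ℝ} (hy_nonneg : ∀ t ω, 0 ≤ y t ω)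
    (hy₀ : ∀ ω, y 0 ω = 0) (hy : ∀ t ω, y (t + 1) ω ≤ ρ * y t ω + b t ω)
    (hb : ∀ t, Integrable (b t) μ) (T : ℕ) :
    (1 - ρ) * ∑ t ∈ range T, ∫ ω, y t ω ∂μ ≤ ∑ t ∈ range T, ∫ ω, b t ω ∂μ := by
  set e : ℕ → ℝ := fun t => ∫ ω, affineRec ρ b t ω ∂μ
  have hye : ∀ t, ∫ ω, y t ω ∂μ ≤ e t := fun t =>
    integral_mono_of_nonneg (.of_forall (hy_nonneg t)) (integrable_affineRec ρ hb t)
      (.of_forall (le_affineRec hρ₀ (fun ω => (hy₀ ω).le) hy t))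
  have he := one_sub_mul_sum_range_add_le (y := e) (by simp [e, affineRec])
    (fun t => (integral_affineRec_succ ρ hb t).le) T
  have heT : 0 ≤ e T := (integral_nonneg (hy_nonneg T)).trans (hye T)
  calc (1 - ρ) * ∑ t ∈ range T, ∫ ω, y t ω ∂μ ≤ (1 - ρ) * ∑ t ∈ range T, e t := by
        gcongr with t _
        exact hye t
    _ ≤ ∑ t ∈ range T, ∫ ω, b t ω ∂μ := by linarith

lemma coeff_grad_le {n : ℝ} (hn : 4 ≤ n) (γ : ℝ) :
    9 / 2 * ((n - 1)⁻¹ * γ) ^ 2 ≤ 2 * γ ^ 2 * (n - 1) ^ 2 / n ^ 2 := by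
  have h3 : 3 ≤ n - 1 := by linarith
  have key : 9 / 2 * ((n - 1)⁻¹) ^ 2 ≤ 2 * (n - 1) ^ 2 / n ^ 2 := by
    rw [inv_pow, ← div_eq_mul_inv, div_le_div_iff₀ (by positivity) (by positivity)]
    nlinarith [mul_le_mul h3 h3 (by norm_num) (by linarith)]
  calc 9 / 2 * ((n - 1)⁻¹ * γ) ^ 2 = 9 / 2 * ((n - 1)⁻¹) ^ 2 * γ ^ 2 := by ring
    _ ≤ 2 * (n - 1) ^ 2 / n ^ 2 * γ ^ 2 := by gcongr
    _ = 2 * γ ^ 2 * (n - 1) ^ 2 / n ^ 2 := by ring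

lemma coeff_noise_le {n : ℝ} (hn : 4 ≤ n) : 9 / 2 * ((n - 1)⁻¹ + 1) ^ 2 ≤ 8 := by
  have h3 : 3 ≤ n - 1 := by linarith
  have hsum : (n - 1)⁻¹ + 1 = n / (n - 1) := by field_simp; ring
  rw [hsum, div_pow, mul_div_assoc', div_le_iff₀ (by positivity)]
  nlinarith

theorem dwfl_consensus_deviation_general (N d T : ℕ) (hN : 4 ≤ N)
    (γ σz : ℝ)
    {Ω : Type*} [MeasurableSpace Ω] (μ : Measure Ω)
    (J W K : Matrix (Fin N) (Fin N) ℝ)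
    (hJ : J = Matrix.of fun _ _ => (1 : ℝ))
    (hW : W = ((N : ℝ) - 1)⁻¹ • (J - 1))
    (hK : K = Matrix.of fun _ _ => (N : ℝ)⁻¹)
    (X G Φ : ℕ → Ω → Matrix (Fin d) (Fin N) ℝ)
    (hGint : ∀ t, Integrable (fun ω => frobSq (G t ω)) μ)
    (hΦint : ∀ t, Integrable (fun ω => frobSq (Φ t ω)) μ)
    (hΦbound : ∀ t, t < T → ∫ ω, frobSq (Φ t ω) ∂μ ≤ σz ^ 2 * (d : ℝ) * (N : ℝ))
    (hX0 : ∀ ω, X 0 ω = 0)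
    (hXrec : ∀ t ω, X (t + 1) ω = (X t ω - γ • G t ω) * W + Φ t ω * (W - 1)) :
    ∑ t ∈ Finset.range T, ∫ ω, frobSq (X t ω * (1 - K)) ∂μ ≤
      (2 * γ ^ 2 * ((N : ℝ) - 1) ^ 2 / (N : ℝ) ^ 2) *
          ∑ t ∈ Finset.range T, ∫ ω, frobSq (G t ω) ∂μ
        + 8 * σz ^ 2 * (d : ℝ) * (N : ℝ) * (T : ℝ) := by
  have hN' : (4 : ℝ) ≤ N := by exact_mod_cast hN
  set c : ℝ := ((N : ℝ) - 1)⁻¹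
  have hc₀ : 0 ≤ c := inv_nonneg.2 (by linarith)
  have hc₃ : c ≤ 1 / 3 := by rw [one_div]; exact inv_anti₀ (by norm_num) (by linarith)
  have hWP : W * (1 - K) = -c • (1 - K) := by
    subst hJ hW hK
    exact smul_allOnes_sub_one_mul_one_sub_avg (by omega) c
  have hproj : ∀ M : Matrix (Fin d) (Fin N) ℝ, frobSq (M * (1 - K)) ≤ frobSq M := by
    subst hK
    exact frobSq_mul_one_sub_avg_le
  have hsum := one_sub_mul_sum_integral_le (μ := μ) (ρ := 1 / 3)
    (y := fun t ω => frobSq (X t ω * (1 - K)))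
    (b := fun t ω => 3 * (c * γ) ^ 2 * frobSq (G t ω) + 3 * (c + 1) ^ 2 * frobSq (Φ t ω))
    (by norm_num) (by norm_num)
    (fun t ω => frobSq_nonneg _) (fun ω => by simp [hX0, frobSq])
    (fun t ω => hXrec t ω ▸ frobSq_consensus_step_le hc₀ hc₃ hWP hproj γ _ _ _)
    (fun t => ((hGint t).const_mul _).add ((hΦint t).const_mul _)) T
  simp only [integral_add ((hGint _).const_mul _) ((hΦint _).const_mul _), integral_const_mul,
    sum_add_distrib, ← mul_sum] at hsum
  have hΦsum : ∑ t ∈ range T, ∫ ω, frobSq (Φ t ω) ∂μ ≤ σz ^ 2 * d * N * T := by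
    simpa [mul_comm] using sum_le_sum fun t ht => hΦbound t (mem_range.1 ht)
  have hGsum : 0 ≤ ∑ t ∈ range T, ∫ ω, frobSq (G t ω) ∂μ :=
    sum_nonneg fun t _ => integral_nonneg fun ω => frobSq_nonneg _
  have hΦsum₀ : 0 ≤ ∑ t ∈ range T, ∫ ω, frobSq (Φ t ω) ∂μ :=
    sum_nonneg fun t _ => integral_nonneg fun ω => frobSq_nonneg _
  have hgrad := mul_le_mul_of_nonneg_right (coeff_grad_le hN' γ) hGsum
  have hnoise := mul_le_mul (coeff_noise_le hN') hΦsum hΦsum₀ (by norm_num)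
  linarith

/-- **Consensus-deviation bound (Lemma 7).** With mixing matrix `W = (J−I)/(N−1)`,
`X_{−1/2} = 0`, recursion `X_{t+1/2} = (X_{t−1/2} − γG_t)W + Φ_t(W−I)` and perturbations
satisfying `E‖Φ_t‖_F² ≤ σ_z²dN`:
`Σ_{t<T} E‖X_{t−1/2}(I − (1/N)_N)‖_F² ≤ (2γ²(N−1)²/N²)·Σ_{t<T} E‖G_t‖_F² + 8σ_z²dNT`. -/
theorem dwfl_consensus_deviation (N d T : ℕ) (hN : 4 ≤ N) (hd : 1 ≤ d) (hT : 1 ≤ T)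
    (γ σz : ℝ) (hγ : 0 < γ) (hσz : 0 ≤ σz)
    {Ω : Type*} [MeasurableSpace Ω] (μ : Measure Ω) [IsProbabilityMeasure μ]
    (J W K : Matrix (Fin N) (Fin N) ℝ)
    (hJ : J = Matrix.of fun _ _ => (1 : ℝ))
    (hW : W = ((N : ℝ) - 1)⁻¹ • (J - 1))
    (hK : K = Matrix.of fun _ _ => (N : ℝ)⁻¹)
    (X G Φ : ℕ → Ω → Matrix (Fin d) (Fin N) ℝ)
    (hGint : ∀ t, Integrable (fun ω => frobSq (G t ω)) μ)
    (hΦint : ∀ t, Integrable (fun ω => frobSq (Φ t ω)) μ)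
    (hΦbound : ∀ t, t < T → ∫ ω, frobSq (Φ t ω) ∂μ ≤ σz ^ 2 * (d : ℝ) * (N : ℝ))
    (hX0 : ∀ ω, X 0 ω = 0)
    (hXrec : ∀ t ω, X (t + 1) ω = (X t ω - γ • G t ω) * W + Φ t ω * (W - 1)) :
    ∑ t ∈ Finset.range T, ∫ ω, frobSq (X t ω * (1 - K)) ∂μ ≤
      (2 * γ ^ 2 * ((N : ℝ) - 1) ^ 2 / (N : ℝ) ^ 2) *
          ∑ t ∈ Finset.range T, ∫ ω, frobSq (G t ω) ∂μ
        + 8 * σz ^ 2 * (d : ℝ) * (N : ℝ) * (T : ℝ) :=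
  dwfl_consensus_deviation_general N d T hN γ σz μ J W K hJ hW hK X G Φ hGint hΦint hΦbound hX0
    hXrec
end
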